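/- arXiv:1310.3555 — 6 statements merged into one kernel-verified Lean document; each statement's English description precedes it below -/
import Mathlib

section
/- Let V ⊆ ℂ∖{0,1} be a nonempty connected open set, c₁, c₂ ∈ ℂ with c₁ + c₂ = 1, and let ω₀, ω₁ : V → ℂ be holomorphic solutions of α(1−α)f″(α) + (1−2α)f′(α) − c₁c₂·f(α) = 0 with ω₀ nowhere vanishing. Set τ := ω₁/ω₀. Suppose there is a sequence (αₙ) in V with αₙ → 0, ω₀(αₙ) → 1, and αₙ·τ′(αₙ) → 1/(2πi). Then for every α ∈ V: α·τ′(α) = 1/(2πi·(1−α)·ω₀(α)²); equivalently, α(1−α)·ω₀(α)²·τ′(α) = 1/(2πi) identically on V. (In the coordinate τ this says ∂_τα = α(1−α)ω₀², where ∂_τ = (1/2πi)d/dτ.) -/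
/-!
The equation `α(1 − α)f″ + (1 − 2α)f′ = c₁c₂ f` is in self-adjoint form `(p f′)′ = c₁c₂ f` with
`p(α) = α(1 − α)`, so by Abel's identity `p · W(ω₀, ω₁)` is constant on the connected set `V`,
where `W` is the Wronskian; moreover `τ′ = W / ω₀²`. Along the sequence `αₙ → 0`,
`p · W = (1 − αₙ) ω₀(αₙ)² · αₙ τ′(αₙ) → 1/(2πi)`, which pins the constant down.
-/

open Complex Filter Topology

section Wronskian

variable {𝕜 : Type*} [NontriviallyNormedField 𝕜]

noncomputable def wronskian (f g : 𝕜 → 𝕜) (x : 𝕜) : 𝕜 :=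
  f x * deriv g x - g x * deriv f x

theorem deriv_div_eq_wronskian_div_sq {f g : 𝕜 → 𝕜} {x : 𝕜} (hf : DifferentiableAt 𝕜 f x)
    (hg : DifferentiableAt 𝕜 g x) (hfx : f x ≠ 0) :
    deriv (fun y => g y / f y) x = wronskian f g x / f x ^ 2 := by
  rw [deriv_fun_div hg hf hfx, wronskian]
  ring

/-- Abel's identity for the self-adjoint equation `(p f′)′ = q f`. -/
theorem hasDerivAt_mul_wronskian_zero {p f g : 𝕜 → 𝕜} {p' q x : 𝕜} (hp : HasDerivAt p p' x)
    (hf : DifferentiableAt 𝕜 f x) (hf' : DifferentiableAt 𝕜 (deriv f) x)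
    (hg : DifferentiableAt 𝕜 g x) (hg' : DifferentiableAt 𝕜 (deriv g) x)
    (hfeq : p x * deriv (deriv f) x + p' * deriv f x - q * f x = 0)
    (hgeq : p x * deriv (deriv g) x + p' * deriv g x - q * g x = 0) :
    HasDerivAt (fun y => p y * wronskian f g y) 0 x := by
  have hW : HasDerivAt (wronskian f g) (deriv f x * deriv g x + f x * deriv (deriv g) x -
      (deriv g x * deriv f x + g x * deriv (deriv f) x)) x :=
    (hf.hasDerivAt.fun_mul hg'.hasDerivAt).fun_sub (hg.hasDerivAt.fun_mul hf'.hasDerivAt)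
  refine (hp.fun_mul hW).congr_deriv ?_
  unfold wronskian
  linear_combination f x * hgeq - g x * hfeq

end Wronskian

theorem IsOpen.exists_mul_wronskian_eq_const {p p' q f g : ℂ → ℂ} {s : Set ℂ} (hs : IsOpen s)
    (hs' : IsPreconnected s) (hp : ∀ x ∈ s, HasDerivAt p (p' x) x)
    (hf : DifferentiableOn ℂ f s) (hg : DifferentiableOn ℂ g s)
    (hfeq : ∀ x ∈ s, p x * deriv (deriv f) x + p' x * deriv f x - q x * f x = 0)
    (hgeq : ∀ x ∈ s, p x * deriv (deriv g) x + p' x * deriv g x - q x * g x = 0) :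
    ∃ C, ∀ x ∈ s, p x * wronskian f g x = C := by
  have hfa := hf.analyticOnNhd hs
  have hga := hg.analyticOnNhd hs
  have habel : ∀ x ∈ s, HasDerivAt (fun y => p y * wronskian f g y) 0 x := fun x hx =>
    hasDerivAt_mul_wronskian_zero (hp x hx) (hfa x hx).differentiableAt
      (hfa.deriv x hx).differentiableAt (hga x hx).differentiableAt
      (hga.deriv x hx).differentiableAt (hfeq x hx) (hgeq x hx)
  exact hs.exists_is_const_of_deriv_eq_zero hs'
    (fun x hx => (habel x hx).differentiableAt.differentiableWithinAt)
    (fun x hx => (habel x hx).deriv)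

theorem hasDerivAt_mul_one_sub (x : ℂ) : HasDerivAt (fun y : ℂ => y * (1 - y)) (1 - 2 * x) x := by
  refine ((hasDerivAt_id' x).fun_mul ((hasDerivAt_id' x).const_sub 1)).congr_deriv ?_
  ring

theorem stmt_1_general (V : Set ℂ) (hVopen : IsOpen V) (hVconn : IsConnected V)
    (hV01 : ∀ α ∈ V, α ≠ 0 ∧ α ≠ 1)
    (c₁ c₂ : ℂ)
    (ω₀ ω₁ : ℂ → ℂ)
    (h₀ : DifferentiableOn ℂ ω₀ V) (h₁ : DifferentiableOn ℂ ω₁ V)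
    (h₀ne : ∀ α ∈ V, ω₀ α ≠ 0)
    (heq₀ : ∀ α ∈ V,
      α * (1 - α) * deriv (deriv ω₀) α + (1 - 2 * α) * deriv ω₀ α - c₁ * c₂ * ω₀ α = 0)
    (heq₁ : ∀ α ∈ V,
      α * (1 - α) * deriv (deriv ω₁) α + (1 - 2 * α) * deriv ω₁ α - c₁ * c₂ * ω₁ α = 0)
    (τ : ℂ → ℂ) (hτ : τ = fun α => ω₁ α / ω₀ α)
    (a : ℕ → ℂ) (haV : ∀ n, a n ∈ V)
    (ha0 : Tendsto a atTop (𝓝 0))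
    (haω : Tendsto (fun n => ω₀ (a n)) atTop (𝓝 1))
    (haτ : Tendsto (fun n => a n * deriv τ (a n)) atTop
      (𝓝 (1 / (2 * (Real.pi : ℂ) * Complex.I)))) :
    ∀ α ∈ V,
      α * deriv τ α = 1 / (2 * (Real.pi : ℂ) * Complex.I * (1 - α) * (ω₀ α) ^ 2) ∧
      α * (1 - α) * (ω₀ α) ^ 2 * deriv τ α = 1 / (2 * (Real.pi : ℂ) * Complex.I) := by
  obtain ⟨C, hC⟩ := hVopen.exists_mul_wronskian_eq_const (q := fun _ => c₁ * c₂)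
    hVconn.isPreconnected (fun x _ => hasDerivAt_mul_one_sub x) h₀ h₁ heq₀ heq₁
  have hτW : ∀ α ∈ V, α * (1 - α) * ω₀ α ^ 2 * deriv τ α = C := fun α hα => by
    rw [hτ, deriv_div_eq_wronskian_div_sq (h₀.differentiableAt (hVopen.mem_nhds hα))
      (h₁.differentiableAt (hVopen.mem_nhds hα)) (h₀ne α hα), ← hC α hα]
    field_simp [h₀ne α hα]
  have hlim : Tendsto (fun n => (1 - a n) * ω₀ (a n) ^ 2 * (a n * deriv τ (a n))) atTop
      (𝓝 (1 / (2 * (Real.pi : ℂ) * Complex.I))) := by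
    simpa only [sub_zero, one_pow, mul_one, one_mul] using
      ((tendsto_const_nhds (x := (1 : ℂ)).sub ha0).mul (haω.pow 2)).mul haτ
  have hCeq : C = 1 / (2 * (Real.pi : ℂ) * Complex.I) := by
    refine tendsto_nhds_unique (tendsto_const_nhds.congr fun n => ?_) hlim
    rw [← hτW (a n) (haV n)]
    ring
  intro α hα
  have h1α : (1 : ℂ) - α ≠ 0 := sub_ne_zero.mpr (hV01 α hα).2.symm
  have hτ' := (hτW α hα).trans hCeq
  refine ⟨?_, hτ'⟩
  calc α * deriv τ α = α * (1 - α) * ω₀ α ^ 2 * deriv τ α / ((1 - α) * ω₀ α ^ 2) := by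
        field_simp [h₀ne α hα]
    _ = _ := by rw [hτ', div_div]; ring

/-- Let `ω₀, ω₁` be holomorphic solutions of the hypergeometric equation
`α(1−α)f″ + (1−2α)f′ − c₁c₂ f = 0` (with `c₁ + c₂ = 1`) on a nonempty connected open set
`V ⊆ ℂ∖{0,1}`, with `ω₀` nowhere vanishing, and set `τ = ω₁/ω₀`.  If along some sequence
`αₙ → 0` in `V` one has `ω₀(αₙ) → 1` and `αₙ·τ′(αₙ) → 1/(2πi)`, then
`α·τ′(α) = 1/(2πi(1−α)ω₀(α)²)` on `V`; equivalently `α(1−α)ω₀²τ′ = 1/(2πi)` on `V`. -/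
theorem stmt_1 (V : Set ℂ) (hVopen : IsOpen V) (hVconn : IsConnected V)
    (hV01 : ∀ α ∈ V, α ≠ 0 ∧ α ≠ 1)
    (c₁ c₂ : ℂ) (hc : c₁ + c₂ = 1)
    (ω₀ ω₁ : ℂ → ℂ)
    (h₀ : DifferentiableOn ℂ ω₀ V) (h₁ : DifferentiableOn ℂ ω₁ V)
    (h₀ne : ∀ α ∈ V, ω₀ α ≠ 0)
    (heq₀ : ∀ α ∈ V,
      α * (1 - α) * deriv (deriv ω₀) α + (1 - 2 * α) * deriv ω₀ α - c₁ * c₂ * ω₀ α = 0)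
    (heq₁ : ∀ α ∈ V,
      α * (1 - α) * deriv (deriv ω₁) α + (1 - 2 * α) * deriv ω₁ α - c₁ * c₂ * ω₁ α = 0)
    (τ : ℂ → ℂ) (hτ : τ = fun α => ω₁ α / ω₀ α)
    (a : ℕ → ℂ) (haV : ∀ n, a n ∈ V)
    (ha0 : Tendsto a atTop (𝓝 0))
    (haω : Tendsto (fun n => ω₀ (a n)) atTop (𝓝 1))
    (haτ : Tendsto (fun n => a n * deriv τ (a n)) atTop
      (𝓝 (1 / (2 * (Real.pi : ℂ) * Complex.I)))) :
    ∀ α ∈ V,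
      α * deriv τ α = 1 / (2 * (Real.pi : ℂ) * Complex.I * (1 - α) * (ω₀ α) ^ 2) ∧
      α * (1 - α) * (ω₀ α) ^ 2 * deriv τ α = 1 / (2 * (Real.pi : ℂ) * Complex.I) :=
  stmt_1_general V hVopen hVconn hV01 c₁ c₂ ω₀ ω₁ h₀ h₁ h₀ne heq₀ heq₁ τ hτ a haV ha0 haω haτ
end

section
/- Assume Setting (★): U ⊆ ℂ is a nonempty connected open set, r is a nonzero real number, α : U → ℂ∖{0,1} is holomorphic, A : U → ℂ is holomorphic and nowhere vanishing, (1/2πi)α′ = α(1−α)A² on U, and A = ω₀ ∘ α for some holomorphic solution ω₀ of α(1−α)ω₀″ + (1−2α)ω₀′ − (1/r)(1−1/r)ω₀ = 0 on an open set containing α(U). Define E := (1−2α)A² + 2r·(∂_τA)/A, where ∂_τ = (1/2πi)d/dτ. Then ∂_τE = (1/2r)(E² − A⁴) on U. -/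
open Complex Filter Topology

/-!
Everything is a function of the Hauptmodul `z = α τ`: since `∂_τ α = z(1-z)A²` and `A = ω₀(z)`,
the generator `E` equals `G(z) = (1-2z)ω₀(z)² + 2r·z(1-z)ω₀(z)ω₀'(z)` and `∂_τ = z(1-z)ω₀(z)² d/dz`
on functions of `z`. The claim becomes the identity `z(1-z)ω₀² G' = (G² - ω₀⁴)/(2r)`, which is a
polynomial consequence of the hypergeometric equation for `ω₀`.
-/

/-- The quasi-modular generator `E` written in the Hauptmodul coordinate. -/
noncomputable def hauptmodulE (r : ℂ) (ω : ℂ → ℂ) (z : ℂ) : ℂ :=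
  (1 - 2 * z) * ω z ^ 2 + 2 * r * (z * (1 - z) * ω z * deriv ω z)

lemma hasDerivAt_hauptmodulE {r z : ℂ} {ω : ℂ → ℂ} (hω : DifferentiableAt ℂ ω z)
    (hω' : DifferentiableAt ℂ (deriv ω) z) :
    HasDerivAt (hauptmodulE r ω)
      (-2 * ω z ^ 2 + (1 - 2 * z) * (2 * ω z * deriv ω z)
        + 2 * r * ((1 - 2 * z) * ω z * deriv ω z
          + z * (1 - z) * (deriv ω z * deriv ω z + ω z * deriv (deriv ω) z))) z := by
  have hlin : HasDerivAt (fun z : ℂ => 1 - 2 * z) (-2) z := by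
    simpa using ((hasDerivAt_id z).const_mul (2 : ℂ)).const_sub 1
  have hquad : HasDerivAt (fun z : ℂ => z * (1 - z)) (1 - 2 * z) z := by
    refine ((hasDerivAt_id z).fun_mul ((hasDerivAt_id z).const_sub 1)).congr_deriv ?_
    simp only [id_eq]
    ring
  refine ((hlin.fun_mul (hω.hasDerivAt.fun_pow 2)).fun_add
    (((hquad.fun_mul hω.hasDerivAt).fun_mul hω'.hasDerivAt).const_mul (2 * r))).congr_deriv ?_
  simp only [Nat.cast_ofNat, Nat.add_one_sub_one, pow_one]
  ring

/-- Ramanujan's equation for `E`, with respect to the derivation `z(1-z)ω² d/dz`. -/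
lemma hauptmodulE_ramanujan {r z : ℂ} {ω : ℂ → ℂ} (hr : r ≠ 0) (hω : DifferentiableAt ℂ ω z)
    (hω' : DifferentiableAt ℂ (deriv ω) z)
    (hode : z * (1 - z) * deriv (deriv ω) z + (1 - 2 * z) * deriv ω z
      - (1 / r) * (1 - 1 / r) * ω z = 0) :
    deriv (hauptmodulE r ω) z * (z * (1 - z) * ω z ^ 2)
      = 1 / (2 * r) * (hauptmodulE r ω z ^ 2 - ω z ^ 4) := by
  have hode' : r ^ 2 * (z * (1 - z) * deriv (deriv ω) z) + r ^ 2 * ((1 - 2 * z) * deriv ω z)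
      - (r - 1) * ω z = 0 := by
    field_simp at hode
    linear_combination hode
  rw [(hasDerivAt_hauptmodulE hω hω').deriv, hauptmodulE]
  field_simp
  linear_combination (4 * z * (1 - z) * ω z ^ 3) * hode'

lemma deriv_eq_deriv_comp_of_eqOn {U : Set ℂ} {f h α : ℂ → ℂ} {τ : ℂ} (hU : IsOpen U)
    (hτ : τ ∈ U) (hf : Set.EqOn f (h ∘ α) U) (hh : DifferentiableAt ℂ h (α τ))
    (hα : DifferentiableAt ℂ α τ) :
    deriv f τ = deriv h (α τ) * deriv α τ :=
  (hf.eventuallyEq_of_mem (hU.mem_nhds hτ)).deriv_eq.trans (deriv_comp τ hh hα)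

lemma eqOn_hauptmodulE_comp {U : Set ℂ} {c r : ℂ} {α A ω : ℂ → ℂ} (hU : IsOpen U)
    (hα : DifferentiableOn ℂ α U) (hω : ∀ τ ∈ U, DifferentiableAt ℂ ω (α τ))
    (hAne : ∀ τ ∈ U, A τ ≠ 0) (hrel : ∀ τ ∈ U, c * deriv α τ = α τ * (1 - α τ) * A τ ^ 2)
    (hAω : ∀ τ ∈ U, A τ = ω (α τ)) :
    Set.EqOn (fun τ => (1 - 2 * α τ) * A τ ^ 2 + 2 * r * (c * deriv A τ) / A τ)
      (hauptmodulE r ω ∘ α) U := by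
  intro τ hτ
  have hA' : deriv A τ = deriv ω (α τ) * deriv α τ :=
    deriv_eq_deriv_comp_of_eqOn hU hτ hAω (hω τ hτ) (hα.differentiableAt (hU.mem_nhds hτ))
  have hcA' : c * deriv A τ = deriv ω (α τ) * (α τ * (1 - α τ) * A τ ^ 2) := by
    rw [hA', ← hrel τ hτ]; ring
  have hA := hAne τ hτ
  simp only [Function.comp, hauptmodulE, hcA', ← hAω τ hτ]
  field_simp

theorem stmt_2_general (U : Set ℂ) (hUopen : IsOpen U)
    (r : ℝ) (hr : r ≠ 0)
    (α A : ℂ → ℂ)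
    (hα : DifferentiableOn ℂ α U)
    (hAne : ∀ τ ∈ U, A τ ≠ 0)
    (hrel : ∀ τ ∈ U,
      (1 / (2 * (Real.pi : ℂ) * Complex.I)) * deriv α τ = α τ * (1 - α τ) * (A τ) ^ 2)
    (ω₀ : ℂ → ℂ) (W : Set ℂ) (hWopen : IsOpen W) (hWsub : α '' U ⊆ W)
    (hω₀ : DifferentiableOn ℂ ω₀ W)
    (hω₀eq : ∀ z ∈ W,
      z * (1 - z) * deriv (deriv ω₀) z + (1 - 2 * z) * deriv ω₀ z
        - (1 / (r : ℂ)) * (1 - 1 / (r : ℂ)) * ω₀ z = 0)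
    (hAω : ∀ τ ∈ U, A τ = ω₀ (α τ))
    (E : ℂ → ℂ)
    (hE : E = fun τ => (1 - 2 * α τ) * (A τ) ^ 2
      + 2 * (r : ℂ) * ((1 / (2 * (Real.pi : ℂ) * Complex.I)) * deriv A τ) / (A τ)) :
    ∀ τ ∈ U,
      (1 / (2 * (Real.pi : ℂ) * Complex.I)) * deriv E τ
        = (1 / (2 * (r : ℂ))) * ((E τ) ^ 2 - (A τ) ^ 4) := by
  intro τ hτ
  have hαW : ∀ τ ∈ U, α τ ∈ W := fun τ hτ => hWsub ⟨τ, hτ, rfl⟩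
  have hω : ∀ τ ∈ U, DifferentiableAt ℂ ω₀ (α τ) := fun τ hτ =>
    hω₀.differentiableAt (hWopen.mem_nhds (hαW τ hτ))
  have hω' : DifferentiableAt ℂ (deriv ω₀) (α τ) :=
    (hω₀.analyticOnNhd hWopen).deriv.differentiableOn.differentiableAt
      (hWopen.mem_nhds (hαW τ hτ))
  have hEG : Set.EqOn E (hauptmodulE r ω₀ ∘ α) U :=
    hE ▸ eqOn_hauptmodulE_comp hUopen hα hω hAne hrel hAω
  rw [deriv_eq_deriv_comp_of_eqOn hUopen hτ hEG
      (hasDerivAt_hauptmodulE (hω τ hτ) hω').differentiableAt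
      (hα.differentiableAt (hUopen.mem_nhds hτ)),
    hEG hτ, Function.comp_apply, hAω τ hτ, mul_left_comm, hrel τ hτ, hAω τ hτ]
  exact hauptmodulE_ramanujan (by exact_mod_cast hr) (hω τ hτ) hω' (hω₀eq _ (hαW τ hτ))

/-- Setting (★): `U ⊆ ℂ` nonempty connected open, `r` a nonzero real,
`α : U → ℂ∖{0,1}` holomorphic, `A : U → ℂ` holomorphic nowhere vanishing,
`(1/2πi)α′ = α(1−α)A²` on `U`, and `A = ω₀ ∘ α` for a holomorphic solution `ω₀` of
`z(1−z)ω₀″ + (1−2z)ω₀′ − (1/r)(1−1/r)ω₀ = 0` on an open set `W ⊇ α(U)`.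
With `E := (1−2α)A² + 2r·(∂_τA)/A` (where `∂_τ = (1/2πi)d/dτ`), one has
`∂_τE = (1/2r)(E² − A⁴)` on `U`. -/
theorem stmt_2 (U : Set ℂ) (hUopen : IsOpen U) (hUconn : IsConnected U)
    (r : ℝ) (hr : r ≠ 0)
    (α A : ℂ → ℂ)
    (hα : DifferentiableOn ℂ α U) (hα01 : ∀ τ ∈ U, α τ ≠ 0 ∧ α τ ≠ 1)
    (hA : DifferentiableOn ℂ A U) (hAne : ∀ τ ∈ U, A τ ≠ 0)
    (hrel : ∀ τ ∈ U,
      (1 / (2 * (Real.pi : ℂ) * Complex.I)) * deriv α τ = α τ * (1 - α τ) * (A τ) ^ 2)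
    (ω₀ : ℂ → ℂ) (W : Set ℂ) (hWopen : IsOpen W) (hWsub : α '' U ⊆ W)
    (hω₀ : DifferentiableOn ℂ ω₀ W)
    (hω₀eq : ∀ z ∈ W,
      z * (1 - z) * deriv (deriv ω₀) z + (1 - 2 * z) * deriv ω₀ z
        - (1 / (r : ℂ)) * (1 - 1 / (r : ℂ)) * ω₀ z = 0)
    (hAω : ∀ τ ∈ U, A τ = ω₀ (α τ))
    (E : ℂ → ℂ)
    (hE : E = fun τ => (1 - 2 * α τ) * (A τ) ^ 2
      + 2 * (r : ℂ) * ((1 / (2 * (Real.pi : ℂ) * Complex.I)) * deriv A τ) / (A τ)) :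
    ∀ τ ∈ U,
      (1 / (2 * (Real.pi : ℂ) * Complex.I)) * deriv E τ
        = (1 / (2 * (r : ℂ))) * ((E τ) ^ 2 - (A τ) ^ 4) :=
  stmt_2_general U hUopen r hr α A hα hAne hrel ω₀ W hWopen hWsub hω₀ hω₀eq hAω E hE
end

section
/- Assume Setting (★): U ⊆ ℂ is a nonempty connected open set, r is a positive integer, α : U → ℂ∖{0,1} is holomorphic, A : U → ℂ is holomorphic and nowhere vanishing, (1/2πi)α′ = α(1−α)A² on U, and A = ω₀ ∘ α for some holomorphic solution ω₀ of α(1−α)ω₀″ + (1−2α)ω₀′ − (1/r)(1−1/r)ω₀ = 0 on an open set containing α(U). Define E := (1−2α)A² + 2r·(∂_τA)/A, and let B, C : U → ℂ be holomorphic functions with B^r = (1−α)·A^r and C^r = α·A^r. Then on U: ∂_τA = (1/2r)·A·(E + (2α−1)A²) = (1/2r)·A·(E + ((C^r − B^r)/A^r)·A²), ∂_τB = (1/2r)·B·(E − A²), and ∂_τC = (1/2r)·C·(E + A²). -/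
open Complex Filter Topology

/-!
Everything follows by logarithmic differentiation. The first identity is the definition of `E`
solved for `∂_τA`. Differentiating `Bʳ = (1 - α)Aʳ` logarithmically gives
`r B'/B = -α'/(1 - α) + r A'/A`, and `∂_τα = α(1 - α)A²` turns this into
`∂_τB / B = ∂_τA / A - αA²/r = (E - A²)/(2r)`; likewise `Cʳ = αAʳ` gives
`∂_τC / C = ∂_τA / A + (1 - α)A²/r = (E + A²)/(2r)`.
-/

theorem mul_logDeriv_eq_of_pow_eventuallyEq {𝕜 𝕜' : Type*} [NontriviallyNormedField 𝕜]
    [NontriviallyNormedField 𝕜'] [NormedAlgebra 𝕜 𝕜'] {g c a : 𝕜 → 𝕜'} {x : 𝕜} {n : ℕ}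
    (hg : DifferentiableAt 𝕜 g x) (hc : DifferentiableAt 𝕜 c x) (ha : DifferentiableAt 𝕜 a x)
    (hcx : c x ≠ 0) (hax : a x ≠ 0) (h : (g · ^ n) =ᶠ[𝓝 x] fun t => c t * a t ^ n) :
    n * logDeriv g x = logDeriv c x + n * logDeriv a x := by
  rw [← logDeriv_fun_pow hg, (logDeriv_congr_nhds h).eq_of_nhds,
    logDeriv_mul (g := (a · ^ n)) x hcx (pow_ne_zero n hax) hc (ha.pow n),
    logDeriv_fun_pow ha]

theorem logDeriv_eq_of_mul_deriv_eq {𝕜 : Type*} [NontriviallyNormedField 𝕜] {f : 𝕜 → 𝕜}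
    {x κ h : 𝕜} (hκ : κ ≠ 0) (hfx : f x ≠ 0) (hf : κ * deriv f x = f x * (1 - f x) * h) :
    logDeriv f x = (1 - f x) * h / κ := by
  rw [logDeriv_apply]
  field_simp
  linear_combination hf

theorem logDeriv_one_sub_eq_of_mul_deriv_eq {𝕜 : Type*} [NontriviallyNormedField 𝕜]
    {f : 𝕜 → 𝕜} {x κ h : 𝕜} (hκ : κ ≠ 0) (hfx : f x ≠ 1)
    (hf : κ * deriv f x = f x * (1 - f x) * h) :
    logDeriv (fun t => 1 - f t) x = -(f x * h / κ) := by
  rw [logDeriv_apply, deriv_const_sub]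
  field_simp
  linear_combination -hf

theorem stmt_3_general (U : Set ℂ) (hUopen : IsOpen U)
    (r : ℕ) (hr : 0 < r)
    (α A : ℂ → ℂ)
    (hα : DifferentiableOn ℂ α U) (hα01 : ∀ τ ∈ U, α τ ≠ 0 ∧ α τ ≠ 1)
    (hA : DifferentiableOn ℂ A U) (hAne : ∀ τ ∈ U, A τ ≠ 0)
    (hrel : ∀ τ ∈ U,
      (1 / (2 * (Real.pi : ℂ) * Complex.I)) * deriv α τ = α τ * (1 - α τ) * (A τ) ^ 2)
    (E : ℂ → ℂ)
    (hE : E = fun τ => (1 - 2 * α τ) * (A τ) ^ 2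
      + 2 * (r : ℂ) * ((1 / (2 * (Real.pi : ℂ) * Complex.I)) * deriv A τ) / (A τ))
    (B C : ℂ → ℂ)
    (hB : DifferentiableOn ℂ B U) (hC : DifferentiableOn ℂ C U)
    (hBr : ∀ τ ∈ U, (B τ) ^ r = (1 - α τ) * (A τ) ^ r)
    (hCr : ∀ τ ∈ U, (C τ) ^ r = α τ * (A τ) ^ r) :
    ∀ τ ∈ U,
      (1 / (2 * (Real.pi : ℂ) * Complex.I)) * deriv A τ
        = (1 / (2 * (r : ℂ))) * A τ * (E τ + (2 * α τ - 1) * (A τ) ^ 2) ∧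
      (1 / (2 * (Real.pi : ℂ) * Complex.I)) * deriv A τ
        = (1 / (2 * (r : ℂ))) * A τ *
            (E τ + (((C τ) ^ r - (B τ) ^ r) / (A τ) ^ r) * (A τ) ^ 2) ∧
      (1 / (2 * (Real.pi : ℂ) * Complex.I)) * deriv B τ
        = (1 / (2 * (r : ℂ))) * B τ * (E τ - (A τ) ^ 2) ∧
      (1 / (2 * (Real.pi : ℂ) * Complex.I)) * deriv C τ
        = (1 / (2 * (r : ℂ))) * C τ * (E τ + (A τ) ^ 2) := by
  intro τ hτ
  subst hE
  have hU : U ∈ 𝓝 τ := hUopen.mem_nhds hτ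
  obtain ⟨hα0, hα1⟩ := hα01 τ hτ
  have hα1' : 1 - α τ ≠ 0 := sub_ne_zero.mpr hα1.symm
  have hAτ := hAne τ hτ
  have hαd := (hα τ hτ).differentiableAt hU
  have hAd := (hA τ hτ).differentiableAt hU
  have hπ : 2 * (Real.pi : ℂ) * I ≠ 0 := by simp [Real.pi_ne_zero]
  have hκ : 1 / (2 * (Real.pi : ℂ) * I) ≠ 0 := one_div_ne_zero hπ
  have hBlog := mul_logDeriv_eq_of_pow_eventuallyEq (c := fun t => 1 - α t)
    ((hB τ hτ).differentiableAt hU) ((differentiableAt_const 1).sub hαd) hAd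
    hα1' hAτ (eventually_of_mem hU hBr)
  have hClog := mul_logDeriv_eq_of_pow_eventuallyEq ((hC τ hτ).differentiableAt hU)
    hαd hAd hα0 hAτ (eventually_of_mem hU hCr)
  rw [logDeriv_one_sub_eq_of_mul_deriv_eq hκ hα1 (hrel τ hτ)] at hBlog
  rw [logDeriv_eq_of_mul_deriv_eq hκ hα0 (hrel τ hτ)] at hClog
  have hBτ : B τ ≠ 0 := ne_zero_pow hr.ne' (hBr τ hτ ▸ mul_ne_zero hα1' (pow_ne_zero r hAτ))
  have hCτ : C τ ≠ 0 := ne_zero_pow hr.ne' (hCr τ hτ ▸ mul_ne_zero hα0 (pow_ne_zero r hAτ))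
  have hr0 : (r : ℂ) ≠ 0 := Nat.cast_ne_zero.mpr hr.ne'
  simp only [logDeriv_apply] at hBlog hClog
  field_simp at hBlog hClog ⊢
  refine ⟨by ring, ?_, ?_, ?_⟩
  · rw [hBr τ hτ, hCr τ hτ]
    field_simp
    ring
  · linear_combination hBlog
  · linear_combination hClog

/-- In Setting (★) (with `r` a positive integer), with
`E := (1−2α)A² + 2r·(∂_τA)/A` and holomorphic `B, C` satisfying `Bʳ = (1−α)Aʳ`,
`Cʳ = αAʳ` on `U`, one has on `U`:
`∂_τA = (1/2r)·A·(E + (2α−1)A²) = (1/2r)·A·(E + ((Cʳ−Bʳ)/Aʳ)A²)`,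
`∂_τB = (1/2r)·B·(E − A²)` and `∂_τC = (1/2r)·C·(E + A²)`. -/
theorem stmt_3 (U : Set ℂ) (hUopen : IsOpen U) (hUconn : IsConnected U)
    (r : ℕ) (hr : 0 < r)
    (α A : ℂ → ℂ)
    (hα : DifferentiableOn ℂ α U) (hα01 : ∀ τ ∈ U, α τ ≠ 0 ∧ α τ ≠ 1)
    (hA : DifferentiableOn ℂ A U) (hAne : ∀ τ ∈ U, A τ ≠ 0)
    (hrel : ∀ τ ∈ U,
      (1 / (2 * (Real.pi : ℂ) * Complex.I)) * deriv α τ = α τ * (1 - α τ) * (A τ) ^ 2)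
    (ω₀ : ℂ → ℂ) (W : Set ℂ) (hWopen : IsOpen W) (hWsub : α '' U ⊆ W)
    (hω₀ : DifferentiableOn ℂ ω₀ W)
    (hω₀eq : ∀ z ∈ W,
      z * (1 - z) * deriv (deriv ω₀) z + (1 - 2 * z) * deriv ω₀ z
        - (1 / (r : ℂ)) * (1 - 1 / (r : ℂ)) * ω₀ z = 0)
    (hAω : ∀ τ ∈ U, A τ = ω₀ (α τ))
    (E : ℂ → ℂ)
    (hE : E = fun τ => (1 - 2 * α τ) * (A τ) ^ 2
      + 2 * (r : ℂ) * ((1 / (2 * (Real.pi : ℂ) * Complex.I)) * deriv A τ) / (A τ))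
    (B C : ℂ → ℂ)
    (hB : DifferentiableOn ℂ B U) (hC : DifferentiableOn ℂ C U)
    (hBr : ∀ τ ∈ U, (B τ) ^ r = (1 - α τ) * (A τ) ^ r)
    (hCr : ∀ τ ∈ U, (C τ) ^ r = α τ * (A τ) ^ r) :
    ∀ τ ∈ U,
      (1 / (2 * (Real.pi : ℂ) * Complex.I)) * deriv A τ
        = (1 / (2 * (r : ℂ))) * A τ * (E τ + (2 * α τ - 1) * (A τ) ^ 2) ∧
      (1 / (2 * (Real.pi : ℂ) * Complex.I)) * deriv A τ
        = (1 / (2 * (r : ℂ))) * A τ *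
            (E τ + (((C τ) ^ r - (B τ) ^ r) / (A τ) ^ r) * (A τ) ^ 2) ∧
      (1 / (2 * (Real.pi : ℂ) * Complex.I)) * deriv B τ
        = (1 / (2 * (r : ℂ))) * B τ * (E τ - (A τ) ^ 2) ∧
      (1 / (2 * (Real.pi : ℂ) * Complex.I)) * deriv C τ
        = (1 / (2 * (r : ℂ))) * C τ * (E τ + (A τ) ^ 2) :=
  stmt_3_general U hUopen r hr α A hα hα01 hA hAne hrel E hE B C hB hC hBr hCr
end

section
/- Let V ⊆ ℂ∖{0,1} be a nonempty connected open set, let c₁, c₂, c₃, c₄ ∈ ℂ with c₁ + c₂ + c₃ + c₄ = 2, and let Π : V → ℂ⁴ be holomorphic such that every component of Π solves the fourth-order equation θ⁴f = α(θ+c₁)(θ+c₂)(θ+c₃)(θ+c₄)f, where θ = α·d/dα. Let Q : ℂ⁴ × ℂ⁴ → ℂ be an alternating bilinear form, and suppose Q(Π(α), (θΠ)(α)) = 0 and Q(Π(α), (θ²Π)(α)) = 0 for all α ∈ V. Then the function (1 − α)·Q(Π(α), (θ³Π)(α)) is constant on V. In particular, if Q(Π(αₙ), (θ³Π)(αₙ))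 → κ along some sequence αₙ → 0 in V, then Q(Π, θ³Π) = κ/(1−α) on V, so that the Yukawa coupling C_{ααα} := α⁻³·Q(Π, θ³Π) equals κ/(α³(1−α)). -/
open Complex Filter Topology

/-- The Euler operator `θf(α) = α·f′(α)`. -/
noncomputable def euler (f : ℂ → ℂ) : ℂ → ℂ := fun α => α * deriv f α

/-- The shifted Euler operator `(θ + c)f`. -/
noncomputable def shiftEuler (c : ℂ) (f : ℂ → ℂ) : ℂ → ℂ := fun α => euler f α + c * f α

/-- The Euler operator applied componentwise to a `ℂ⁴`-valued function. -/
noncomputable def eulerVec (f : ℂ → Fin 4 → ℂ) : ℂ → Fin 4 → ℂ :=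
  fun α i => euler (fun β => f β i) α

/-! Write `W = Q(Π, θ³Π)`. Since `θ` acts on `Q(u, v)` as a derivation and `Q` is alternating,
applying `θ` to the transversality relation `Q(Π, θ²Π) = 0` twice gives `Q(θΠ, θ³Π) = -θW` and then
`Q(Π, θ⁴Π) = 2θW`. Pairing the Picard–Fuchs equation with `Π` kills every term except those in
`θ⁴Π` and `θ³Π` (the latter with coefficient `c₁ + c₂ + c₃ + c₄ = 2`), so `2θW = α(2θW + 2W)`,
i.e. `(1 - α)θW = αW`. Hence `((1 - α)W)' = 0` on the connected set `V`, and the constant is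
read off along `αₙ → 0`. -/

open Set

lemma euler_congr_of_eqOn {V : Set ℂ} (hV : IsOpen V) {f g : ℂ → ℂ} (h : EqOn f g V) :
    EqOn (euler f) (euler g) V := fun α hα => by
  simp only [euler, (h.eventuallyEq_of_mem (hV.mem_nhds hα)).deriv_eq]

lemma euler_add_mul {f g : ℂ → ℂ} {α : ℂ} (hf : DifferentiableAt ℂ f α)
    (hg : DifferentiableAt ℂ g α) (c : ℂ) :
    euler (fun β => f β + c * g β) α = euler f α + c * euler g α := by
  have h : HasDerivAt (fun β => f β + c * g β) (deriv f α + c * deriv g α) α :=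
    hf.hasDerivAt.add (hg.hasDerivAt.const_mul c)
  simp only [euler, h.deriv]
  ring

lemma euler_neg (f : ℂ → ℂ) (α : ℂ) : euler (fun β => -f β) α = -euler f α := by
  change α * deriv (-f) α = _
  rw [deriv.neg, mul_neg, euler]

lemma AnalyticOnNhd.euler {V : Set ℂ} {g : ℂ → ℂ} (hg : AnalyticOnNhd ℂ g V) :
    AnalyticOnNhd ℂ (_root_.euler g) V :=
  analyticOnNhd_id.mul hg.deriv

lemma AnalyticOnNhd.iterate_euler {V : Set ℂ} {g : ℂ → ℂ} (hg : AnalyticOnNhd ℂ g V) (k : ℕ) :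
    AnalyticOnNhd ℂ (_root_.euler^[k] g) V := by
  induction k with
  | zero => exact hg
  | succ k ih => rw [Function.iterate_succ_apply']; exact ih.euler

lemma AnalyticOnNhd.shiftEuler {V : Set ℂ} {g : ℂ → ℂ} (hg : AnalyticOnNhd ℂ g V) (c : ℂ) :
    AnalyticOnNhd ℂ (_root_.shiftEuler c g) V :=
  hg.euler.add (analyticOnNhd_const.mul hg)

lemma eqOn_iterate_euler_shiftEuler {V : Set ℂ} (hV : IsOpen V) {g : ℂ → ℂ}
    (hg : AnalyticOnNhd ℂ g V) (c : ℂ) (k : ℕ) :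
    EqOn (euler^[k] (shiftEuler c g)) (fun β => euler^[k + 1] g β + c * euler^[k] g β) V := by
  induction k with
  | zero => exact fun _ _ => rfl
  | succ k ih =>
    intro α hα
    rw [Function.iterate_succ_apply', euler_congr_of_eqOn hV ih hα,
      euler_add_mul ((hg.iterate_euler (k + 1)) α hα).differentiableAt
        ((hg.iterate_euler k) α hα).differentiableAt c]
    simp only [Function.iterate_succ_apply']

lemma shiftEuler_four_eq {V : Set ℂ} (hV : IsOpen V) {g : ℂ → ℂ} (hg : AnalyticOnNhd ℂ g V)
    (c₁ c₂ c₃ c₄ : ℂ) {α : ℂ} (hα : α ∈ V) :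
    shiftEuler c₁ (shiftEuler c₂ (shiftEuler c₃ (shiftEuler c₄ g))) α =
      euler^[4] g α + (c₁ + c₂ + c₃ + c₄) * euler^[3] g α
      + (c₁*c₂ + c₁*c₃ + c₁*c₄ + c₂*c₃ + c₂*c₄ + c₃*c₄) * euler^[2] g α
      + (c₁*c₂*c₃ + c₁*c₂*c₄ + c₁*c₃*c₄ + c₂*c₃*c₄) * euler^[1] g α
      + c₁*c₂*c₃*c₄ * g α := by
  have hS₄ := hg.shiftEuler c₄
  have hS₃ := hS₄.shiftEuler c₃
  have hS₂ := hS₃.shiftEuler c₂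
  have key {f : ℂ → ℂ} (hf : AnalyticOnNhd ℂ f V) (c : ℂ) (k : ℕ) :=
    eqOn_iterate_euler_shiftEuler hV hf c k hα
  have h₁ := key hS₂ c₁ 0
  rw [Function.iterate_zero_apply] at h₁
  simp only [h₁, key hS₃, key hS₄, key hg, Function.iterate_zero_apply]
  ring

def IsPicardFuchsSolution (c₁ c₂ c₃ c₄ : ℂ) (V : Set ℂ) (g : ℂ → ℂ) : Prop :=
  ∀ α ∈ V, euler (euler (euler (euler g))) α =
    α * shiftEuler c₁ (shiftEuler c₂ (shiftEuler c₃ (shiftEuler c₄ g))) α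

lemma iterate_eulerVec_apply (f : ℂ → Fin 4 → ℂ) (k : ℕ) (α : ℂ) (i : Fin 4) :
    eulerVec^[k] f α i = euler^[k] (fun β => f β i) α := by
  induction k generalizing α with
  | zero => rfl
  | succ k ih => simp only [Function.iterate_succ_apply', eulerVec, ih]

lemma differentiableAt_iterate_eulerVec {V : Set ℂ} {P : ℂ → Fin 4 → ℂ}
    (hP : ∀ i, AnalyticOnNhd ℂ (fun α => P α i) V) (k : ℕ) {α : ℂ} (hα : α ∈ V) :
    DifferentiableAt ℂ (eulerVec^[k] P) α :=
  differentiableAt_pi.2 fun i => by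
    simp only [iterate_eulerVec_apply]
    exact ((hP i).iterate_euler k α hα).differentiableAt

lemma eulerVec_eq_smul_deriv {f : ℂ → Fin 4 → ℂ} {α : ℂ} (hf : DifferentiableAt ℂ f α) :
    eulerVec f α = α • deriv f α := by
  ext i
  rw [deriv_pi (differentiableAt_pi.1 hf)]
  rfl

lemma hasDerivAt_bilinear {E : Type*} [NormedAddCommGroup E] [NormedSpace ℂ E]
    [FiniteDimensional ℂ E] (Q : E →ₗ[ℂ] E →ₗ[ℂ] ℂ) {f g : ℂ → E} {α : ℂ} (hf : DifferentiableAt ℂ f α) (hg : DifferentiableAt ℂ g α) :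
    HasDerivAt (fun β => Q (f β) (g β)) (Q (f α) (deriv g α) + Q (deriv f α) (g α)) α :=
  Q.toContinuousBilinearMap.hasDerivAt_of_bilinear (fun _ => hf.hasDerivAt) fun _ => hg.hasDerivAt

lemma euler_bilinear (Q : (Fin 4 → ℂ) →ₗ[ℂ] (Fin 4 → ℂ) →ₗ[ℂ] ℂ) {f g : ℂ → Fin 4 → ℂ}
    {α : ℂ} (hf : DifferentiableAt ℂ f α) (hg : DifferentiableAt ℂ g α) :
    euler (fun β => Q (f β) (g β)) α = Q (eulerVec f α) (g α) + Q (f α) (eulerVec g α) := by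
  rw [euler, (hasDerivAt_bilinear Q hf hg).deriv, eulerVec_eq_smul_deriv hf,
    eulerVec_eq_smul_deriv hg]
  simp only [map_smul, LinearMap.smul_apply, smul_eq_mul]
  ring

section Transversality

variable {V : Set ℂ} {P : ℂ → Fin 4 → ℂ} (Q : (Fin 4 → ℂ) →ₗ[ℂ] (Fin 4 → ℂ) →ₗ[ℂ] ℂ)

lemma pairing_eulerVec_eulerVec2_eq_neg (hV : IsOpen V)
    (hP : ∀ i, AnalyticOnNhd ℂ (fun α => P α i) V)
    (hQ2 : ∀ α ∈ V, Q (P α) (eulerVec (eulerVec P) α) = 0) {α : ℂ} (hα : α ∈ V) :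
    Q (eulerVec P α) (eulerVec (eulerVec P) α) = -Q (P α) (eulerVec (eulerVec (eulerVec P)) α) := by
  have h := euler_bilinear Q (f := P) (g := eulerVec (eulerVec P))
    (differentiableAt_iterate_eulerVec hP 0 hα) (differentiableAt_iterate_eulerVec hP 2 hα)
  rw [euler_congr_of_eqOn hV (g := 0) hQ2 hα] at h
  simp only [euler, Pi.zero_def, deriv_const, mul_zero] at h
  linear_combination -h

lemma pairing_eulerVec_eulerVec3_eq_neg_euler (hV : IsOpen V)
    (hP : ∀ i, AnalyticOnNhd ℂ (fun α => P α i) V) (hQalt : ∀ x, Q x x = 0)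
    (hQ2 : ∀ α ∈ V, Q (P α) (eulerVec (eulerVec P) α) = 0) {α : ℂ} (hα : α ∈ V) :
    Q (eulerVec P α) (eulerVec (eulerVec (eulerVec P)) α) =
      -euler (fun β => Q (P β) (eulerVec (eulerVec (eulerVec P)) β)) α := by
  have h := euler_bilinear Q (f := eulerVec P) (g := eulerVec (eulerVec P))
    (differentiableAt_iterate_eulerVec hP 1 hα) (differentiableAt_iterate_eulerVec hP 2 hα)
  rw [euler_congr_of_eqOn hV (fun β hβ => pairing_eulerVec_eulerVec2_eq_neg Q hV hP hQ2 hβ) hα,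
    euler_neg, hQalt, zero_add] at h
  linear_combination -h

lemma eulerVec4_eq_of_isPicardFuchsSolution (hV : IsOpen V) (hP : ∀ i, AnalyticOnNhd ℂ (fun α => P α i) V)
    (c₁ c₂ c₃ c₄ : ℂ)
    (hode : ∀ i, IsPicardFuchsSolution c₁ c₂ c₃ c₄ V (fun β => P β i))
    {α : ℂ} (hα : α ∈ V) :
    eulerVec (eulerVec (eulerVec (eulerVec P))) α =
      α • (eulerVec (eulerVec (eulerVec (eulerVec P))) α
        + (c₁ + c₂ + c₃ + c₄) • eulerVec (eulerVec (eulerVec P)) α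
        + (c₁*c₂ + c₁*c₃ + c₁*c₄ + c₂*c₃ + c₂*c₄ + c₃*c₄) • eulerVec (eulerVec P) α
        + (c₁*c₂*c₃ + c₁*c₂*c₄ + c₁*c₃*c₄ + c₂*c₃*c₄) • eulerVec P α
        + (c₁*c₂*c₃*c₄) • P α) := by
  ext i
  have h := hode i α hα
  rw [shiftEuler_four_eq hV (hP i) c₁ c₂ c₃ c₄ hα] at h
  simp only [Pi.add_apply, Pi.smul_apply, smul_eq_mul]
  exact h

lemma pairing_eulerVec4_eq (hV : IsOpen V) (hP : ∀ i, AnalyticOnNhd ℂ (fun α => P α i) V)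
    (c₁ c₂ c₃ c₄ : ℂ) (hc : c₁ + c₂ + c₃ + c₄ = 2)
    (hode : ∀ i, IsPicardFuchsSolution c₁ c₂ c₃ c₄ V (fun β => P β i))
    (hQalt : ∀ x, Q x x = 0) (hQ1 : ∀ α ∈ V, Q (P α) (eulerVec P α) = 0)
    (hQ2 : ∀ α ∈ V, Q (P α) (eulerVec (eulerVec P) α) = 0) {α : ℂ} (hα : α ∈ V) :
    Q (P α) (eulerVec (eulerVec (eulerVec (eulerVec P))) α) =
      α * (Q (P α) (eulerVec (eulerVec (eulerVec (eulerVec P))) α)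
        + 2 * Q (P α) (eulerVec (eulerVec (eulerVec P)) α)) := by
  have h := congrArg (Q (P α)) (eulerVec4_eq_of_isPicardFuchsSolution hV hP c₁ c₂ c₃ c₄ hode hα)
  simp only [map_add, map_smul, smul_eq_mul] at h
  rw [hQalt, hc, hQ1 α hα, hQ2 α hα] at h
  linear_combination h

lemma hasDerivAt_one_sub_mul_pairing_eulerVec3 (hV : IsOpen V)
    (hP : ∀ i, AnalyticOnNhd ℂ (fun α => P α i) V)
    (c₁ c₂ c₃ c₄ : ℂ) (hc : c₁ + c₂ + c₃ + c₄ = 2)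
    (hode : ∀ i, IsPicardFuchsSolution c₁ c₂ c₃ c₄ V (fun β => P β i))
    (hQalt : ∀ x, Q x x = 0) (hQ1 : ∀ α ∈ V, Q (P α) (eulerVec P α) = 0)
    (hQ2 : ∀ α ∈ V, Q (P α) (eulerVec (eulerVec P) α) = 0) {α : ℂ} (hα : α ∈ V) (hα0 : α ≠ 0) :
    HasDerivAt (fun β => (1 - β) * Q (P β) (eulerVec (eulerVec (eulerVec P)) β)) 0 α := by
  set W := fun β => Q (P β) (eulerVec (eulerVec (eulerVec P)) β)
  have hW : HasDerivAt W (deriv W α) α :=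
    (hasDerivAt_bilinear Q (differentiableAt_iterate_eulerVec hP 0 hα)
      (differentiableAt_iterate_eulerVec hP 3 hα)).differentiableAt.hasDerivAt
  have h₁ := pairing_eulerVec_eulerVec3_eq_neg_euler Q hV hP hQalt hQ2 hα
  have h₂ := euler_bilinear Q (f := P) (g := eulerVec (eulerVec (eulerVec P)))
    (differentiableAt_iterate_eulerVec hP 0 hα) (differentiableAt_iterate_eulerVec hP 3 hα)
  have h₃ := pairing_eulerVec4_eq Q hV hP c₁ c₂ c₃ c₄ hc hode hQalt hQ1 hQ2 hα
  -- `h₁` and `h₂` give `Q (P α) (θ⁴P α) = 2 θW α`, which turns `h₃` into this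
  have key : (1 - α) * euler W α = α * W α := by
    linear_combination h₃ / 2 + (1 - α) / 2 * (h₁ + h₂)
  refine (((hasDerivAt_id' α).const_sub 1).mul hW).congr_deriv ?_
  apply mul_left_cancel₀ hα0
  simp only [euler] at key
  linear_combination key

end Transversality

/-- Let `P : V → ℂ⁴` be a holomorphic period vector on a nonempty
connected open `V ⊆ ℂ∖{0,1}` all of whose components solve the fourth-order equation
`θ⁴f = α(θ+c₁)(θ+c₂)(θ+c₃)(θ+c₄)f` with `c₁+c₂+c₃+c₄ = 2`, and let `Q` be an
alternating bilinear form with `Q(P, θP) = 0 = Q(P, θ²P)` on `V` (Griffiths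
transversality).  Then `(1−α)·Q(P, θ³P)` is constant on `V`; if moreover
`Q(P, θ³P) → κ` along a sequence tending to `0` in `V`, then `Q(P, θ³P) = κ/(1−α)`
on `V` and the Yukawa coupling `α⁻³·Q(P, θ³P)` equals `κ/(α³(1−α))`. -/
theorem stmt_6 (V : Set ℂ) (hVopen : IsOpen V) (hVconn : IsConnected V)
    (hV01 : ∀ α ∈ V, α ≠ 0 ∧ α ≠ 1)
    (c₁ c₂ c₃ c₄ : ℂ) (hc : c₁ + c₂ + c₃ + c₄ = 2)
    (P : ℂ → Fin 4 → ℂ)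
    (hP : ∀ i, DifferentiableOn ℂ (fun α => P α i) V)
    (hode : ∀ i, ∀ α ∈ V,
      euler (euler (euler (euler (fun β => P β i)))) α =
        α * shiftEuler c₁ (shiftEuler c₂ (shiftEuler c₃ (shiftEuler c₄ (fun β => P β i)))) α)
    (Q : (Fin 4 → ℂ) →ₗ[ℂ] (Fin 4 → ℂ) →ₗ[ℂ] ℂ)
    (hQalt : ∀ x, Q x x = 0)
    (hQ1 : ∀ α ∈ V, Q (P α) (eulerVec P α) = 0)
    (hQ2 : ∀ α ∈ V, Q (P α) (eulerVec (eulerVec P) α) = 0) :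
    (∃ k : ℂ, ∀ α ∈ V,
      (1 - α) * Q (P α) (eulerVec (eulerVec (eulerVec P)) α) = k) ∧
    ∀ (κ : ℂ) (a : ℕ → ℂ), (∀ n, a n ∈ V) →
      Tendsto a atTop (𝓝 0) →
      Tendsto (fun n => Q (P (a n)) (eulerVec (eulerVec (eulerVec P)) (a n))) atTop (𝓝 κ) →
      ∀ α ∈ V,
        Q (P α) (eulerVec (eulerVec (eulerVec P)) α) = κ / (1 - α) ∧
        (α ^ 3)⁻¹ * Q (P α) (eulerVec (eulerVec (eulerVec P)) α)
          = κ / (α ^ 3 * (1 - α)) := by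
  have hPan : ∀ i, AnalyticOnNhd ℂ (fun α => P α i) V := fun i => (hP i).analyticOnNhd hVopen
  have hderiv : ∀ α ∈ V,
      HasDerivAt (fun β => (1 - β) * Q (P β) (eulerVec (eulerVec (eulerVec P)) β)) 0 α :=
    fun α hα => hasDerivAt_one_sub_mul_pairing_eulerVec3 Q hVopen hPan c₁ c₂ c₃ c₄ hc hode hQalt
      hQ1 hQ2 hα (hV01 α hα).1
  obtain ⟨k, hk⟩ := hVopen.exists_is_const_of_deriv_eq_zero hVconn.isPreconnected
    (fun α hα => (hderiv α hα).differentiableAt.differentiableWithinAt)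
    (fun α hα => (hderiv α hα).deriv)
  refine ⟨⟨k, hk⟩, fun κ a haV ha hlim α hα => ?_⟩
  have hkκ : k = κ := by
    have h : Tendsto (fun n => (1 - a n) * Q (P (a n)) (eulerVec (eulerVec (eulerVec P)) (a n)))
        atTop (𝓝 ((1 - 0) * κ)) := (tendsto_const_nhds.sub ha).mul hlim
    simp only [fun n => hk (a n) (haV n), sub_zero, one_mul] at h
    exact tendsto_nhds_unique tendsto_const_nhds h
  have h1α : 1 - α ≠ 0 := sub_ne_zero.2 (hV01 α hα).2.symm
  have hW : Q (P α) (eulerVec (eulerVec (eulerVec P)) α) = κ / (1 - α) := by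
    rw [eq_div_iff h1α, mul_comm, hk α hα, hkκ]
  refine ⟨hW, ?_⟩
  rw [hW, inv_mul_eq_div, div_div, mul_comm (1 - α)]
end

section
/- Let V ⊆ ℂ∖{0,1} be a nonempty connected open set, c₁, c₂, c₃, c₄ ∈ ℂ, and let ℒ := θ⁴ − α(θ+c₁)(θ+c₂)(θ+c₃)(θ+c₄) with θ = α·d/dα. Let X⁰, t : V → ℂ be holomorphic with ℒX⁰ = 0 and ℒ(X⁰·t) = 0 on V, and with X⁰ and θt nowhere vanishing. Define the derivation 𝒟f := (1−α)·(X⁰·θt)²·θf on holomorphic functions on V. Then the ℂ-subalgebra of holomorphic functions on V generated by α, α⁻¹, (1−α)⁻¹, X⁰, (X⁰)⁻¹, θt, (θt)⁻¹, 𝒟X⁰, 𝒟²X⁰, 𝒟³X⁰, 𝒟(θt) and 𝒟²(θt) is closed under 𝒟. -/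
/-!
Write `𝒟 = U·θ` with `U = (1 - α)(X⁰·θt)²`; both `U` and `U⁻¹` lie in the algebra generated by
`α^{±1}, (1 - α)⁻¹, (X⁰)^{±1}, (θt)^{±1}`. Let `L` be `θ` or `𝒟`, and let level `n` of `L` be that
algebra with `LᵏX⁰` (`k ≤ n + 1`) and `Lᵏ(θt)` (`k ≤ n`) adjoined; level 2 of `𝒟` is the algebra
of the theorem. By the Leibniz rule `L` maps level `n` into level `n + 1`, and since `𝒟 = U·θ`,
an induction on `n` shows that the levels of `θ` and of `𝒟` agree modulo functions vanishing
on `V`. The Picard–Fuchs equation, `(1 - α)θ⁴f = α·(lower θ-derivatives of f)`, for `f = X⁰`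
expresses `θ⁴X⁰` at level 2; subtracting `t` times it from the equation for `f = X⁰t` leaves
`(1 - α)X⁰θ⁴t` plus products of lower derivatives, so `θ⁴t` is at level 2 as well. Hence
level 3 of `θ` collapses to level 2, and `𝒟` maps `𝒟`-level 2 into
`𝒟`-level 3 = `θ`-level 3 = `θ`-level 2 = `𝒟`-level 2.
-/

open Complex Filter Topology

/-- The derivation `𝒟f = (1−α)·(X⁰·θt)²·θf` (the derivative `∂_τ` written in the
`α`-coordinate). -/
noncomputable def Dop (X0 t : ℂ → ℂ) (f : ℂ → ℂ) : ℂ → ℂ :=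
  fun α => (1 - α) * (X0 α * (α * deriv t α)) ^ 2 * (α * deriv f α)

/-- The generating set: `α, α⁻¹, (1−α)⁻¹, X⁰, (X⁰)⁻¹, θt, (θt)⁻¹, 𝒟X⁰, 𝒟²X⁰, 𝒟³X⁰,
𝒟(θt), 𝒟²(θt)`. -/
noncomputable def genSet (X0 t : ℂ → ℂ) : Set (ℂ → ℂ) :=
  {fun α => α, fun α => α⁻¹, fun α => (1 - α)⁻¹, X0, fun α => (X0 α)⁻¹,
   fun α => α * deriv t α, fun α => (α * deriv t α)⁻¹,
   Dop X0 t X0, Dop X0 t (Dop X0 t X0), Dop X0 t (Dop X0 t (Dop X0 t X0)),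
   Dop X0 t (fun α => α * deriv t α), Dop X0 t (Dop X0 t (fun α => α * deriv t α))}

open Set

namespace Subalgebra

variable {R X : Type*} [CommSemiring R]

def eqOnClosure (A : Subalgebra R (X → R)) (V : Set X) : Subalgebra R (X → R) where
  carrier := {f | ∃ g ∈ A, EqOn f g V}
  mul_mem' := by
    rintro f g ⟨f', hf', hf⟩ ⟨g', hg', hg⟩
    exact ⟨f' * g', A.mul_mem hf' hg', fun α hα => by simp [hf hα, hg hα]⟩
  add_mem' := by
    rintro f g ⟨f', hf', hf⟩ ⟨g', hg', hg⟩
    exact ⟨f' + g', A.add_mem hf' hg', fun α hα => by simp [hf hα, hg hα]⟩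
  algebraMap_mem' r := ⟨_, A.algebraMap_mem r, eqOn_refl _ _⟩

variable {A C : Subalgebra R (X → R)} {V : Set X}

theorem le_eqOnClosure : A ≤ A.eqOnClosure V := fun f hf => ⟨f, hf, eqOn_refl _ _⟩

theorem mem_eqOnClosure_of_eqOn {f g : X → R} (hg : g ∈ A.eqOnClosure V) (h : EqOn f g V) :
    f ∈ A.eqOnClosure V :=
  let ⟨g', hg', hgg'⟩ := hg
  ⟨g', hg', h.trans hgg'⟩

theorem eqOnClosure_mono (h : A ≤ C) : A.eqOnClosure V ≤ C.eqOnClosure V :=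
  fun _ ⟨g, hg, hfg⟩ => ⟨g, h hg, hfg⟩

theorem eqOnClosure_le_eqOnClosure (h : A ≤ C.eqOnClosure V) :
    A.eqOnClosure V ≤ C.eqOnClosure V :=
  fun _ ⟨_, hg, hfg⟩ => mem_eqOnClosure_of_eqOn (h hg) hfg

end Subalgebra

open Subalgebra

-- `euler` is definitionally `weightedDeriv fun α => α`, so everything below applies to `θ`.
noncomputable def weightedDeriv (w f : ℂ → ℂ) : ℂ → ℂ := fun α => w α * deriv f α

section weightedDeriv

variable {V : Set ℂ} {w f g : ℂ → ℂ}

theorem weightedDeriv_congr (hV : IsOpen V) (h : EqOn f g V) :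
    EqOn (weightedDeriv w f) (weightedDeriv w g) V := fun α hα => by
  simp only [weightedDeriv, (eventuallyEq_of_mem (hV.mem_nhds hα) h).deriv_eq]

theorem weightedDeriv_add (hV : IsOpen V) (hf : DifferentiableOn ℂ f V)
    (hg : DifferentiableOn ℂ g V) :
    EqOn (weightedDeriv w (f + g)) (weightedDeriv w f + weightedDeriv w g) V := fun α hα => by
  simp only [weightedDeriv, Pi.add_apply, deriv_add (hf.differentiableAt (hV.mem_nhds hα))
    (hg.differentiableAt (hV.mem_nhds hα)), mul_add]

theorem weightedDeriv_mul (hV : IsOpen V) (hf : DifferentiableOn ℂ f V)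
    (hg : DifferentiableOn ℂ g V) :
    EqOn (weightedDeriv w (f * g)) (weightedDeriv w f * g + f * weightedDeriv w g) V :=
  fun α hα => by
    simp only [weightedDeriv, Pi.add_apply, Pi.mul_apply, deriv_mul
      (hf.differentiableAt (hV.mem_nhds hα)) (hg.differentiableAt (hV.mem_nhds hα))]
    ring

theorem weightedDeriv_inv (hV : IsOpen V) (hf : DifferentiableOn ℂ f V)
    (hf0 : ∀ α ∈ V, f α ≠ 0) :
    EqOn (weightedDeriv w fun α => (f α)⁻¹)
      (-((fun α => (f α)⁻¹) ^ 2 * weightedDeriv w f)) V := fun α hα => by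
  simp only [weightedDeriv, Pi.neg_apply, Pi.mul_apply, Pi.pow_apply,
    deriv_fun_inv'' (hf.differentiableAt (hV.mem_nhds hα)) (hf0 α hα)]
  ring

theorem weightedDeriv_const (c : ℂ) : weightedDeriv w (fun _ => c) = 0 := by
  ext; simp [weightedDeriv]

theorem weightedDeriv_id : weightedDeriv w (fun α => α) = w := by
  ext; simp [weightedDeriv]

theorem DifferentiableOn.weightedDeriv (hf : DifferentiableOn ℂ f V) (hV : IsOpen V)
    (hw : DifferentiableOn ℂ w V) : DifferentiableOn ℂ (weightedDeriv w f) V :=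
  hw.mul (hf.deriv hV)

end weightedDeriv

section adjoin

variable {V : Set ℂ} {w : ℂ → ℂ} {s : Set (ℂ → ℂ)}

theorem differentiableOn_of_mem_adjoin (hs : ∀ g ∈ s, DifferentiableOn ℂ g V) {f : ℂ → ℂ}
    (hf : f ∈ Algebra.adjoin ℂ s) : DifferentiableOn ℂ f V := by
  induction hf using Algebra.adjoin_induction with
  | mem g hg => exact hs g hg
  | algebraMap r => exact differentiableOn_const r
  | add f g _ _ hf hg => exact hf.add hg
  | mul f g _ _ hf hg => exact hf.mul hg

theorem weightedDeriv_mem_of_mem_adjoin (hV : IsOpen V) {C : Subalgebra ℂ (ℂ → ℂ)}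
    (hs : ∀ g ∈ s, DifferentiableOn ℂ g V) (hsC : s ⊆ C.eqOnClosure V)
    (hDs : ∀ g ∈ s, weightedDeriv w g ∈ C.eqOnClosure V) {f : ℂ → ℂ}
    (hf : f ∈ Algebra.adjoin ℂ s) : weightedDeriv w f ∈ C.eqOnClosure V := by
  have hle : Algebra.adjoin ℂ s ≤ C.eqOnClosure V := Algebra.adjoin_le hsC
  induction hf using Algebra.adjoin_induction with
  | mem g hg => exact hDs g hg
  | algebraMap r =>
    rw [show algebraMap ℂ (ℂ → ℂ) r = fun _ => r from rfl, weightedDeriv_const]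
    exact zero_mem _
  | add f g hf hg ihf ihg =>
    exact mem_eqOnClosure_of_eqOn (add_mem ihf ihg) (weightedDeriv_add hV
      (differentiableOn_of_mem_adjoin hs hf) (differentiableOn_of_mem_adjoin hs hg))
  | mul f g hf hg ihf ihg =>
    exact mem_eqOnClosure_of_eqOn (add_mem (mul_mem ihf (hle hg)) (mul_mem (hle hf) ihg))
      (weightedDeriv_mul hV (differentiableOn_of_mem_adjoin hs hf)
        (differentiableOn_of_mem_adjoin hs hg))

theorem weightedDeriv_inv_mem (hV : IsOpen V) {C : Subalgebra ℂ (ℂ → ℂ)} {f : ℂ → ℂ}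
    (hf : DifferentiableOn ℂ f V) (hf0 : ∀ α ∈ V, f α ≠ 0)
    (hinv : (fun α => (f α)⁻¹) ∈ C.eqOnClosure V) (hDf : weightedDeriv w f ∈ C.eqOnClosure V) :
    weightedDeriv w (fun α => (f α)⁻¹) ∈ C.eqOnClosure V :=
  mem_eqOnClosure_of_eqOn (neg_mem (mul_mem (pow_mem hinv 2) hDf)) (weightedDeriv_inv hV hf hf0)

end adjoin

-- `s` stands for `θt`, which is already a first derivative of `t`: it lags one level behind `x`.
def levelGens (L : (ℂ → ℂ) → ℂ → ℂ) (x s : ℂ → ℂ) (n : ℕ) : Set (ℂ → ℂ) :=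
  {fun α => α, fun α => α⁻¹, fun α => (1 - α)⁻¹, fun α => (x α)⁻¹, fun α => (s α)⁻¹} ∪
    ({f | ∃ k ≤ n + 1, f = L^[k] x} ∪ {f | ∃ k ≤ n, f = L^[k] s})

abbrev levelAlg (L : (ℂ → ℂ) → ℂ → ℂ) (x s : ℂ → ℂ) (n : ℕ) : Subalgebra ℂ (ℂ → ℂ) :=
  Algebra.adjoin ℂ (levelGens L x s n)

section levels

variable {L : (ℂ → ℂ) → ℂ → ℂ} {x s : ℂ → ℂ}

theorem levelGens_mono {m n : ℕ} (h : m ≤ n) : levelGens L x s m ⊆ levelGens L x s n := by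
  rintro f (hf | ⟨k, hk, rfl⟩ | ⟨k, hk, rfl⟩)
  exacts [Or.inl hf, Or.inr (Or.inl ⟨k, by omega, rfl⟩), Or.inr (Or.inr ⟨k, by omega, rfl⟩)]

theorem levelAlg_mono {m n : ℕ} (h : m ≤ n) : levelAlg L x s m ≤ levelAlg L x s n :=
  Algebra.adjoin_mono (levelGens_mono h)

theorem levelGens_succ_subset (n : ℕ) :
    levelGens L x s (n + 1) ⊆ levelGens L x s n ∪ L '' levelGens L x s n := by
  rintro f (hf | ⟨k, hk, rfl⟩ | ⟨k, hk, rfl⟩)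
  · exact Or.inl (Or.inl hf)
  · rcases Nat.lt_or_ge k (n + 2) with hk' | hk'
    · exact Or.inl (Or.inr (Or.inl ⟨k, by omega, rfl⟩))
    · obtain rfl : k = n + 2 := by omega
      exact Or.inr ⟨L^[n + 1] x, Or.inr (Or.inl ⟨n + 1, le_rfl, rfl⟩),
        (Function.iterate_succ_apply' L (n + 1) x).symm⟩
  · rcases Nat.lt_or_ge k (n + 1) with hk' | hk'
    · exact Or.inl (Or.inr (Or.inr ⟨k, by omega, rfl⟩))
    · obtain rfl : k = n + 1 := by omega
      exact Or.inr ⟨L^[n] s, Or.inr (Or.inr ⟨n, le_rfl, rfl⟩),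
        (Function.iterate_succ_apply' L n s).symm⟩

theorem id_mem_levelAlg (n : ℕ) : (fun α => α) ∈ levelAlg L x s n :=
  Algebra.subset_adjoin (by simp [levelGens])

theorem inv_mem_levelAlg (n : ℕ) : (fun α => α⁻¹) ∈ levelAlg L x s n :=
  Algebra.subset_adjoin (by simp [levelGens])

theorem one_sub_inv_mem_levelAlg (n : ℕ) : (fun α => (1 - α)⁻¹) ∈ levelAlg L x s n :=
  Algebra.subset_adjoin (by simp [levelGens])

theorem x_inv_mem_levelAlg (n : ℕ) : (fun α => (x α)⁻¹) ∈ levelAlg L x s n :=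
  Algebra.subset_adjoin (by simp [levelGens])

theorem s_inv_mem_levelAlg (n : ℕ) : (fun α => (s α)⁻¹) ∈ levelAlg L x s n :=
  Algebra.subset_adjoin (by simp [levelGens])

theorem iterate_x_mem_levelAlg {n k : ℕ} (hk : k ≤ n + 1) : L^[k] x ∈ levelAlg L x s n :=
  Algebra.subset_adjoin (Or.inr (Or.inl ⟨k, hk, rfl⟩))

theorem iterate_s_mem_levelAlg {n k : ℕ} (hk : k ≤ n) : L^[k] s ∈ levelAlg L x s n :=
  Algebra.subset_adjoin (Or.inr (Or.inr ⟨k, hk, rfl⟩))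

end levels

section levelStep

variable {V : Set ℂ} {w x s : ℂ → ℂ}

theorem differentiableOn_iterate_weightedDeriv (hV : IsOpen V) (hw : DifferentiableOn ℂ w V)
    {f : ℂ → ℂ} (hf : DifferentiableOn ℂ f V) (k : ℕ) :
    DifferentiableOn ℂ ((weightedDeriv w)^[k] f) V := by
  induction k with
  | zero => exact hf
  | succ k ih => rw [Function.iterate_succ_apply']; exact ih.weightedDeriv hV hw

theorem differentiableOn_of_mem_levelAlg (hV : IsOpen V) (hV01 : ∀ α ∈ V, α ≠ 0 ∧ α ≠ 1)
    (hw : DifferentiableOn ℂ w V) (hx : DifferentiableOn ℂ x V) (hs : DifferentiableOn ℂ s V)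
    (hx0 : ∀ α ∈ V, x α ≠ 0) (hs0 : ∀ α ∈ V, s α ≠ 0) {n : ℕ} {f : ℂ → ℂ}
    (hf : f ∈ levelAlg (weightedDeriv w) x s n) : DifferentiableOn ℂ f V := by
  refine differentiableOn_of_mem_adjoin ?_ hf
  rintro g (hg | ⟨k, -, rfl⟩ | ⟨k, -, rfl⟩)
  · simp only [Set.mem_insert_iff, Set.mem_singleton_iff] at hg
    rcases hg with rfl | rfl | rfl | rfl | rfl
    · exact differentiableOn_id
    · exact differentiableOn_id.inv fun α hα => (hV01 α hα).1
    · exact ((differentiableOn_const 1).sub differentiableOn_id).inv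
        fun α hα => sub_ne_zero.2 (hV01 α hα).2.symm
    · exact hx.inv hx0
    · exact hs.inv hs0
  · exact differentiableOn_iterate_weightedDeriv hV hw hx k
  · exact differentiableOn_iterate_weightedDeriv hV hw hs k

theorem weightedDeriv_mem_levelAlg_succ (hV : IsOpen V) (hV01 : ∀ α ∈ V, α ≠ 0 ∧ α ≠ 1)
    (hw : DifferentiableOn ℂ w V) (hx : DifferentiableOn ℂ x V) (hs : DifferentiableOn ℂ s V)
    (hx0 : ∀ α ∈ V, x α ≠ 0) (hs0 : ∀ α ∈ V, s α ≠ 0)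
    (hw0 : w ∈ (levelAlg (weightedDeriv w) x s 0).eqOnClosure V) {n : ℕ} {f : ℂ → ℂ}
    (hf : f ∈ levelAlg (weightedDeriv w) x s n) :
    weightedDeriv w f ∈ (levelAlg (weightedDeriv w) x s (n + 1)).eqOnClosure V := by
  set B := (levelAlg (weightedDeriv w) x s (n + 1)).eqOnClosure V
  have hle : ∀ m ≤ n + 1, levelAlg (weightedDeriv w) x s m ≤ B :=
    fun m hm => (levelAlg_mono hm).trans le_eqOnClosure
  have hDid : weightedDeriv w (fun α => α) ∈ B :=
    weightedDeriv_id ▸ eqOnClosure_mono (levelAlg_mono (Nat.zero_le _)) hw0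
  have hDx : weightedDeriv w x ∈ B := hle _ le_rfl (iterate_x_mem_levelAlg (k := 1) (by omega))
  have hDs : weightedDeriv w s ∈ B := hle _ le_rfl (iterate_s_mem_levelAlg (k := 1) (by omega))
  have hD1 : weightedDeriv w (fun α => 1 - α) ∈ B := by
    have : weightedDeriv w (fun α => 1 - α) = -weightedDeriv w (fun α => α) := by
      ext; simp [weightedDeriv]
    exact this ▸ neg_mem hDid
  refine weightedDeriv_mem_of_mem_adjoin hV
    (fun g hg => differentiableOn_of_mem_levelAlg hV hV01 hw hx hs hx0 hs0
      (Algebra.subset_adjoin hg))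
    (fun g hg => hle n (by omega) (Algebra.subset_adjoin hg)) ?_ hf
  rintro g (hg | ⟨k, hk, rfl⟩ | ⟨k, hk, rfl⟩)
  · simp only [Set.mem_insert_iff, Set.mem_singleton_iff] at hg
    rcases hg with rfl | rfl | rfl | rfl | rfl
    · exact hDid
    · exact weightedDeriv_inv_mem hV differentiableOn_id (fun α hα => (hV01 α hα).1)
        (hle 0 (by omega) (inv_mem_levelAlg 0)) hDid
    · exact weightedDeriv_inv_mem hV ((differentiableOn_const 1).sub differentiableOn_id)
        (fun α hα => sub_ne_zero.2 (hV01 α hα).2.symm)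
        (hle 0 (by omega) (one_sub_inv_mem_levelAlg 0)) hD1
    · exact weightedDeriv_inv_mem hV hx hx0 (hle 0 (by omega) (x_inv_mem_levelAlg 0)) hDx
    · exact weightedDeriv_inv_mem hV hs hs0 (hle 0 (by omega) (s_inv_mem_levelAlg 0)) hDs
  · rw [← Function.iterate_succ_apply' (weightedDeriv w)]
    exact hle _ le_rfl (iterate_x_mem_levelAlg (by omega))
  · rw [← Function.iterate_succ_apply' (weightedDeriv w)]
    exact hle _ le_rfl (iterate_s_mem_levelAlg (by omega))

theorem weightedDeriv_eqOn_mul {w' u f : ℂ → ℂ} (hw' : EqOn w' (u * w) V) :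
    EqOn (weightedDeriv w' f) (u * weightedDeriv w f) V := fun α hα => by
  simp [weightedDeriv, hw' hα, mul_assoc]

theorem levelAlg_le_eqOnClosure_of_eqOn_mul (hV : IsOpen V) (hV01 : ∀ α ∈ V, α ≠ 0 ∧ α ≠ 1)
    (hw : DifferentiableOn ℂ w V) (hx : DifferentiableOn ℂ x V) (hs : DifferentiableOn ℂ s V)
    (hx0 : ∀ α ∈ V, x α ≠ 0) (hs0 : ∀ α ∈ V, s α ≠ 0)
    (hw0 : w ∈ (levelAlg (weightedDeriv w) x s 0).eqOnClosure V) {w' u : ℂ → ℂ}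
    (hu : u ∈ (levelAlg (weightedDeriv w) x s 0).eqOnClosure V) (hw' : EqOn w' (u * w) V)
    (n : ℕ) :
    levelAlg (weightedDeriv w') x s n ≤ (levelAlg (weightedDeriv w) x s n).eqOnClosure V := by
  have hstep : ∀ {m f}, f ∈ (levelAlg (weightedDeriv w) x s m).eqOnClosure V →
      weightedDeriv w' f ∈ (levelAlg (weightedDeriv w) x s (m + 1)).eqOnClosure V := by
    rintro m f ⟨c, hc, hfc⟩
    exact mem_eqOnClosure_of_eqOn (mul_mem (eqOnClosure_mono (levelAlg_mono (Nat.zero_le _)) hu)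
      (weightedDeriv_mem_levelAlg_succ hV hV01 hw hx hs hx0 hs0 hw0 hc))
      ((weightedDeriv_congr hV hfc).trans (weightedDeriv_eqOn_mul hw'))
  induction n with
  | zero =>
    refine Algebra.adjoin_le ?_
    rintro g (hg | ⟨k, hk, rfl⟩ | ⟨k, hk, rfl⟩)
    · exact le_eqOnClosure (Algebra.subset_adjoin (Or.inl hg))
    · interval_cases k
      · exact le_eqOnClosure (iterate_x_mem_levelAlg (k := 0) (by omega))
      · exact mem_eqOnClosure_of_eqOn
          (mul_mem hu (le_eqOnClosure (iterate_x_mem_levelAlg (k := 1) le_rfl)))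
          (weightedDeriv_eqOn_mul hw')
    · obtain rfl : k = 0 := by omega
      exact le_eqOnClosure (iterate_s_mem_levelAlg le_rfl)
  | succ n ih =>
    refine Algebra.adjoin_le fun g hg => ?_
    rcases levelGens_succ_subset n hg with hg | ⟨h, hh, rfl⟩
    · exact eqOnClosure_mono (levelAlg_mono n.le_succ) (ih (Algebra.subset_adjoin hg))
    · exact hstep (ih (Algebra.subset_adjoin hh))

end levelStep

open Polynomial Finset

section picardFuchs

variable {V : Set ℂ} {f g : ℂ → ℂ}

theorem differentiableOn_iterate_euler (hV : IsOpen V) (hf : DifferentiableOn ℂ f V) (k : ℕ) :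
    DifferentiableOn ℂ (euler^[k] f) V :=
  differentiableOn_iterate_weightedDeriv hV differentiableOn_id hf k

theorem mul_deriv_iterate_euler (k : ℕ) (β : ℂ) :
    β * deriv (euler^[k] f) β = euler^[k + 1] f β := by
  rw [Function.iterate_succ_apply']; rfl

theorem iterate_euler_mul_eqOn (hV : IsOpen V) (hf : DifferentiableOn ℂ f V)
    (hg : DifferentiableOn ℂ g V) (n : ℕ) :
    EqOn (euler^[n] fun β => f β * g β)
      (fun β => ∑ k ∈ range (n + 1), (n.choose k : ℂ) * (euler^[k] f β * euler^[n - k] g β))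
      V := by
  induction n with
  | zero => intro β _; simp
  | succ n ih =>
    intro β hβ
    have hd : ∀ k, DifferentiableAt ℂ (euler^[k] f) β ∧ DifferentiableAt ℂ (euler^[k] g) β :=
      fun k => ⟨(differentiableOn_iterate_euler hV hf k).differentiableAt (hV.mem_nhds hβ),
        (differentiableOn_iterate_euler hV hg k).differentiableAt (hV.mem_nhds hβ)⟩
    calc euler^[n + 1] (fun β => f β * g β) β
        = β * deriv (fun β => ∑ k ∈ range (n + 1),
            (n.choose k : ℂ) * (euler^[k] f β * euler^[n - k] g β)) β := by
          rw [Function.iterate_succ_apply']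
          exact weightedDeriv_congr (w := fun α => α) hV ih hβ
      _ = ∑ k ∈ range (n + 1), (n.choose k : ℂ) * (euler^[k] f β * euler^[n + 1 - k] g β)
            + ∑ k ∈ range (n + 1), (n.choose k : ℂ) * (euler^[k + 1] f β * euler^[n - k] g β) := by
          rw [deriv_fun_sum (A := fun k β => (n.choose k : ℂ) * (euler^[k] f β * euler^[n - k] g β))
            fun k _ => ((hd k).1.mul (hd (n - k)).2).const_mul _, mul_sum,
            ← sum_add_distrib]
          refine sum_congr rfl fun k hk => ?_
          rw [deriv_const_mul _ ((hd k).1.fun_mul (hd (n - k)).2),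
            deriv_fun_mul (hd k).1 (hd (n - k)).2,
            show n + 1 - k = n - k + 1 by have := mem_range.1 hk; omega,
            ← mul_deriv_iterate_euler, ← mul_deriv_iterate_euler]
          ring
      _ = _ := (sum_choose_succ_mul (fun i j => euler^[i] f β * euler^[j] g β) n).symm

noncomputable def pfPoly (c₁ c₂ c₃ c₄ : ℂ) : ℂ[X] :=
  (X + C c₁) * ((X + C c₂) * ((X + C c₃) * (X + C c₄)))

theorem pfPoly_coeff_four (c₁ c₂ c₃ c₄ : ℂ) : (pfPoly c₁ c₂ c₃ c₄).coeff 4 = 1 := by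
  have hmonic : (pfPoly c₁ c₂ c₃ c₄).Monic := by unfold pfPoly; monicity!
  have hdeg : (pfPoly c₁ c₂ c₃ c₄).natDegree = 4 := by unfold pfPoly; compute_degree!
  rw [← hdeg]
  exact hmonic

theorem shiftEuler_eqOn_sum (hV : IsOpen V) (hf : DifferentiableOn ℂ f V) {p : ℂ[X]}
    (hp : p.coeff 4 = 0) (hg : EqOn g (fun β => ∑ k ∈ range 5, p.coeff k * euler^[k] f β) V)
    (c : ℂ) :
    EqOn (shiftEuler c g)
      (fun β => ∑ k ∈ range 5, ((X + C c) * p).coeff k * euler^[k] f β) V := by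
  intro β hβ
  have hd : ∀ k ∈ range 5, DifferentiableAt ℂ (fun β => p.coeff k * euler^[k] f β) β :=
    fun k _ => ((differentiableOn_iterate_euler hV hf k).differentiableAt
      (hV.mem_nhds hβ)).const_mul _
  have hθg : euler g β = ∑ k ∈ range 5, p.coeff k * euler^[k + 1] f β := by
    rw [show euler g β = weightedDeriv (fun α => α) g β from rfl, weightedDeriv_congr hV hg hβ,
      weightedDeriv, deriv_fun_sum hd,
      mul_sum]
    refine sum_congr rfl fun k hk => ?_
    rw [deriv_const_mul _ ((differentiableOn_iterate_euler hV hf k).differentiableAt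
      (hV.mem_nhds hβ)), ← mul_deriv_iterate_euler]
    ring
  simp only [shiftEuler, hθg, hg hβ]
  simp [sum_range_succ, add_mul, coeff_X_mul, hp]
  ring

theorem shiftEuler_four_eqOn (hV : IsOpen V) (hf : DifferentiableOn ℂ f V) (c₁ c₂ c₃ c₄ : ℂ) :
    EqOn (shiftEuler c₁ (shiftEuler c₂ (shiftEuler c₃ (shiftEuler c₄ f))))
      (fun β => ∑ k ∈ range 5, (pfPoly c₁ c₂ c₃ c₄).coeff k * euler^[k] f β) V := by
  have hbase : EqOn f (fun β => ∑ k ∈ range 5, (1 : ℂ[X]).coeff k * euler^[k] f β) V :=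
    fun β _ => by simp [coeff_one]
  have h := shiftEuler_eqOn_sum hV hf ?_ (shiftEuler_eqOn_sum hV hf ?_ (shiftEuler_eqOn_sum hV hf ?_
    (shiftEuler_eqOn_sum hV hf (by simp [coeff_one]) hbase c₄) c₃) c₂) c₁
  · simpa [pfPoly] using h
  all_goals
    exact coeff_eq_zero_of_natDegree_lt (lt_of_le_of_lt (b := 3) (by compute_degree!) (by norm_num))

end picardFuchs

theorem iterate_euler_mem_levelAlg {x t : ℂ → ℂ} {n m : ℕ} (h1 : 1 ≤ m) (hm : m ≤ n + 1) :
    euler^[m] t ∈ levelAlg euler x (euler t) n := by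
  obtain ⟨k, rfl⟩ : ∃ k, m = k + 1 := ⟨m - 1, by omega⟩
  exact iterate_s_mem_levelAlg (by omega)

noncomputable def leibnizTail (x t : ℂ → ℂ) (n : ℕ) : ℂ → ℂ :=
  ∑ j ∈ range n, (n.choose j : ℂ) • (euler^[j] x * euler^[n - j] t)

theorem leibnizTail_apply (x t : ℂ → ℂ) (n : ℕ) (β : ℂ) : leibnizTail x t n β =
    ∑ j ∈ range n, (n.choose j : ℂ) * (euler^[j] x β * euler^[n - j] t β) := by
  simp [leibnizTail, Finset.sum_apply]

theorem leibnizTail_mem_levelAlg {x t : ℂ → ℂ} {n m : ℕ} (hn : n ≤ m + 1) :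
    leibnizTail x t n ∈ levelAlg euler x (euler t) m :=
  sum_mem fun j hj => Subalgebra.smul_mem _ (mul_mem
    (iterate_x_mem_levelAlg (by have := mem_range.1 hj; omega))
    (iterate_euler_mem_levelAlg (by have := mem_range.1 hj; omega) (by omega))) _

section picardFuchsLevel

variable {V : Set ℂ} {c₁ c₂ c₃ c₄ : ℂ} {x t : ℂ → ℂ}

theorem one_sub_mul_iterate_euler_four (hV : IsOpen V) {f : ℂ → ℂ} (hf : DifferentiableOn ℂ f V)
    (hL : ∀ α ∈ V, euler (euler (euler (euler f))) α =
      α * shiftEuler c₁ (shiftEuler c₂ (shiftEuler c₃ (shiftEuler c₄ f))) α) (β : ℂ)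
    (hβ : β ∈ V) :
    (1 - β) * euler^[4] f β =
      β * ∑ k ∈ range 4, (pfPoly c₁ c₂ c₃ c₄).coeff k * euler^[k] f β := by
  have h := hL β hβ
  have hexp := shiftEuler_four_eqOn hV hf c₁ c₂ c₃ c₄ hβ
  simp only at hexp
  rw [hexp, sum_range_succ, pfPoly_coeff_four] at h
  change euler^[4] f β = _ at h
  linear_combination h

theorem iterate_euler_four_mem_eqOnClosure (hV : IsOpen V) (hV1 : ∀ α ∈ V, α ≠ 1)
    (hx : DifferentiableOn ℂ x V)
    (hL : ∀ α ∈ V, euler (euler (euler (euler x))) α =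
      α * shiftEuler c₁ (shiftEuler c₂ (shiftEuler c₃ (shiftEuler c₄ x))) α) (s : ℂ → ℂ) :
    euler^[4] x ∈ (levelAlg euler x s 2).eqOnClosure V := by
  refine mem_eqOnClosure_of_eqOn (g := (fun β => β) * (fun β => (1 - β)⁻¹) *
      ∑ k ∈ range 4, (pfPoly c₁ c₂ c₃ c₄).coeff k • euler^[k] x)
    (le_eqOnClosure (mul_mem (mul_mem (id_mem_levelAlg 2) (one_sub_inv_mem_levelAlg 2))
      (sum_mem fun k hk => Subalgebra.smul_mem _
        (iterate_x_mem_levelAlg (by have := mem_range.1 hk; omega)) _)))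
    fun β hβ => ?_
  have h1 : 1 - β ≠ 0 := sub_ne_zero.2 (hV1 β hβ).symm
  simp only [Pi.mul_apply, Finset.sum_apply, Pi.smul_apply, smul_eq_mul]
  field_simp
  linear_combination one_sub_mul_iterate_euler_four hV hx hL β hβ



theorem leibnizTail_eqOn (hV : IsOpen V) (hx : DifferentiableOn ℂ x V)
    (ht : DifferentiableOn ℂ t V) (n : ℕ) :
    EqOn (leibnizTail x t n)
      (fun β => euler^[n] (fun β => x β * t β) β - t β * euler^[n] x β) V := fun β hβ => by
  simp [leibnizTail_apply, iterate_euler_mul_eqOn hV hx ht n hβ, sum_range_succ, mul_comm]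

theorem one_sub_mul_leibnizTail_four (hV : IsOpen V) (hx : DifferentiableOn ℂ x V)
    (ht : DifferentiableOn ℂ t V)
    (hL1 : ∀ α ∈ V, euler (euler (euler (euler x))) α =
      α * shiftEuler c₁ (shiftEuler c₂ (shiftEuler c₃ (shiftEuler c₄ x))) α)
    (hL2 : ∀ α ∈ V, euler (euler (euler (euler (fun β => x β * t β)))) α =
      α * shiftEuler c₁ (shiftEuler c₂ (shiftEuler c₃ (shiftEuler c₄ (fun β => x β * t β)))) α)
    (β : ℂ) (hβ : β ∈ V) :
    (1 - β) * leibnizTail x t 4 β =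
      β * ∑ k ∈ range 4, (pfPoly c₁ c₂ c₃ c₄).coeff k * leibnizTail x t k β := by
  have h1 := one_sub_mul_iterate_euler_four hV hx hL1 β hβ
  have h2 := one_sub_mul_iterate_euler_four hV (hx.mul ht) hL2 β hβ
  simp only [fun n => leibnizTail_eqOn hV hx ht n hβ, sum_range_succ, sum_range_zero] at h1 h2 ⊢
  linear_combination h2 - t β * h1

theorem iterate_euler_three_euler_mem_eqOnClosure (hV : IsOpen V) (hV1 : ∀ α ∈ V, α ≠ 1)
    (hx : DifferentiableOn ℂ x V) (ht : DifferentiableOn ℂ t V) (hx0 : ∀ α ∈ V, x α ≠ 0)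
    (hL1 : ∀ α ∈ V, euler (euler (euler (euler x))) α =
      α * shiftEuler c₁ (shiftEuler c₂ (shiftEuler c₃ (shiftEuler c₄ x))) α)
    (hL2 : ∀ α ∈ V, euler (euler (euler (euler (fun β => x β * t β)))) α =
      α * shiftEuler c₁ (shiftEuler c₂ (shiftEuler c₃ (shiftEuler c₄ (fun β => x β * t β)))) α) :
    euler^[3] (euler t) ∈ (levelAlg euler x (euler t) 2).eqOnClosure V := by
  -- the terms of `leibnizTail x t 4` other than `x θ⁴t`
  set R : ℂ → ℂ := ∑ j ∈ range 3, ((4 : ℕ).choose (j + 1) : ℂ) •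
    (euler^[j + 1] x * euler^[4 - (j + 1)] t)
  have hR : R ∈ levelAlg euler x (euler t) 2 := sum_mem fun j hj => Subalgebra.smul_mem _
    (mul_mem (iterate_x_mem_levelAlg (by have := mem_range.1 hj; omega))
      (iterate_euler_mem_levelAlg (by have := mem_range.1 hj; omega) (by omega))) _
  have hsplit : ∀ β, leibnizTail x t 4 β = x β * euler^[3] (euler t) β + R β := by
    intro β
    rw [leibnizTail_apply, sum_range_succ']
    simp [R, Finset.sum_apply]
    ring
  refine mem_eqOnClosure_of_eqOn (g := (fun β => (x β)⁻¹) * ((fun β => β) *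
      (fun β => (1 - β)⁻¹) * ∑ k ∈ range 4, (pfPoly c₁ c₂ c₃ c₄).coeff k • leibnizTail x t k - R))
    (le_eqOnClosure (mul_mem (x_inv_mem_levelAlg 2) (sub_mem (mul_mem (mul_mem
      (id_mem_levelAlg 2) (one_sub_inv_mem_levelAlg 2)) (sum_mem fun k hk =>
        Subalgebra.smul_mem _ (leibnizTail_mem_levelAlg (by have := mem_range.1 hk; omega)) _))
      hR))) fun β hβ => ?_
  have h1 : 1 - β ≠ 0 := sub_ne_zero.2 (hV1 β hβ).symm
  have hx0β := hx0 β hβ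
  have hk := one_sub_mul_leibnizTail_four hV hx ht hL1 hL2 β hβ
  rw [hsplit] at hk
  simp only [Pi.mul_apply, Pi.sub_apply, Finset.sum_apply, Pi.smul_apply, smul_eq_mul]
  field_simp
  linear_combination hk

theorem levelAlg_euler_three_le (hV : IsOpen V) (hV1 : ∀ α ∈ V, α ≠ 1)
    (hx : DifferentiableOn ℂ x V) (ht : DifferentiableOn ℂ t V)
    (hx0 : ∀ α ∈ V, x α ≠ 0)
    (hL1 : ∀ α ∈ V, euler (euler (euler (euler x))) α =
      α * shiftEuler c₁ (shiftEuler c₂ (shiftEuler c₃ (shiftEuler c₄ x))) α)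
    (hL2 : ∀ α ∈ V, euler (euler (euler (euler (fun β => x β * t β)))) α =
      α * shiftEuler c₁ (shiftEuler c₂ (shiftEuler c₃ (shiftEuler c₄ (fun β => x β * t β)))) α) :
    levelAlg euler x (euler t) 3 ≤ (levelAlg euler x (euler t) 2).eqOnClosure V := by
  refine Algebra.adjoin_le ?_
  rintro g (hg | ⟨k, hk, rfl⟩ | ⟨k, hk, rfl⟩)
  · exact le_eqOnClosure (Algebra.subset_adjoin (Or.inl hg))
  · rcases Nat.lt_or_ge k 4 with hk' | hk'
    · exact le_eqOnClosure (iterate_x_mem_levelAlg (by omega))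
    · obtain rfl : k = 4 := by omega
      exact iterate_euler_four_mem_eqOnClosure hV hV1 hx hL1 _
  · rcases Nat.lt_or_ge k 3 with hk' | hk'
    · exact le_eqOnClosure (iterate_s_mem_levelAlg (by omega))
    · obtain rfl : k = 3 := by omega
      exact iterate_euler_three_euler_mem_eqOnClosure hV hV1 hx ht hx0 hL1 hL2

end picardFuchsLevel

noncomputable def dopCoeff (X0 t : ℂ → ℂ) : ℂ → ℂ := fun α => (1 - α) * (X0 α * euler t α) ^ 2

section dopCoeff

variable {V : Set ℂ} {X0 t : ℂ → ℂ}

theorem Dop_eq_weightedDeriv (X0 t : ℂ → ℂ) :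
    Dop X0 t = weightedDeriv (dopCoeff X0 t * fun α => α) := by
  ext f α
  simp only [Dop, weightedDeriv, dopCoeff, euler, Pi.mul_apply]
  ring

theorem dopCoeff_mem_levelAlg (L : (ℂ → ℂ) → ℂ → ℂ) (n : ℕ) :
    dopCoeff X0 t ∈ levelAlg L X0 (euler t) n :=
  mul_mem (sub_mem (one_mem _) (id_mem_levelAlg n)) (pow_mem (mul_mem
    (iterate_x_mem_levelAlg (k := 0) (by omega)) (iterate_s_mem_levelAlg (k := 0) (by omega))) 2)

theorem inv_dopCoeff_mem_levelAlg (L : (ℂ → ℂ) → ℂ → ℂ) (n : ℕ) :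
    (fun α => (dopCoeff X0 t α)⁻¹) ∈ levelAlg L X0 (euler t) n := by
  have h : (fun α => (dopCoeff X0 t α)⁻¹) =
      (fun α => (1 - α)⁻¹) * ((fun α => (X0 α)⁻¹) * fun α => (euler t α)⁻¹) ^ 2 := by
    ext α
    simp only [dopCoeff, Pi.mul_apply, Pi.pow_apply, mul_inv, inv_pow, mul_pow]
  rw [h]
  exact mul_mem (one_sub_inv_mem_levelAlg n)
    (pow_mem (mul_mem (x_inv_mem_levelAlg n) (s_inv_mem_levelAlg n)) 2)

theorem differentiableOn_dopCoeff (hV : IsOpen V) (hX0 : DifferentiableOn ℂ X0 V)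
    (ht : DifferentiableOn ℂ t V) : DifferentiableOn ℂ (dopCoeff X0 t) V :=
  ((differentiableOn_const 1).sub differentiableOn_id).mul
    ((hX0.mul (ht.weightedDeriv hV differentiableOn_id)).pow 2)

theorem dopCoeff_ne_zero (hV01 : ∀ α ∈ V, α ≠ 0 ∧ α ≠ 1) (hX0 : ∀ α ∈ V, X0 α ≠ 0)
    (hθt : ∀ α ∈ V, euler t α ≠ 0) {α : ℂ} (hα : α ∈ V) : dopCoeff X0 t α ≠ 0 :=
  mul_ne_zero (sub_ne_zero.2 (hV01 α hα).2.symm) (pow_ne_zero 2 (mul_ne_zero (hX0 α hα) (hθt α hα)))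

end dopCoeff

theorem genSet_eq_levelGens (X0 t : ℂ → ℂ) :
    genSet X0 t = levelGens (Dop X0 t) X0 (euler t) 2 := by
  ext g
  simp only [genSet, levelGens, Set.mem_insert_iff, Set.mem_singleton_iff, Set.mem_union]
  constructor
  · rintro (rfl | rfl | rfl | rfl | rfl | rfl | rfl | rfl | rfl | rfl | rfl | rfl)
    all_goals first
      | exact Or.inl (by tauto)
      | exact Or.inr (Or.inl ⟨0, by norm_num, rfl⟩)
      | exact Or.inr (Or.inl ⟨1, by norm_num, rfl⟩)
      | exact Or.inr (Or.inl ⟨2, by norm_num, rfl⟩)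
      | exact Or.inr (Or.inl ⟨3, by norm_num, rfl⟩)
      | exact Or.inr (Or.inr ⟨0, by norm_num, rfl⟩)
      | exact Or.inr (Or.inr ⟨1, by norm_num, rfl⟩)
      | exact Or.inr (Or.inr ⟨2, by norm_num, rfl⟩)
  · rintro (h | ⟨k, hk, rfl⟩ | ⟨k, hk, rfl⟩)
    · rcases h with h | h | h | h | h <;> subst h <;> tauto
    all_goals interval_cases k <;> tauto

theorem stmt_8_general (V : Set ℂ) (hVopen : IsOpen V)
    (hV01 : ∀ α ∈ V, α ≠ 0 ∧ α ≠ 1)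
    (c₁ c₂ c₃ c₄ : ℂ)
    (X0 t : ℂ → ℂ)
    (hX0 : DifferentiableOn ℂ X0 V) (ht : DifferentiableOn ℂ t V)
    (hX0ne : ∀ α ∈ V, X0 α ≠ 0) (hθtne : ∀ α ∈ V, α * deriv t α ≠ 0)
    (hL1 : ∀ α ∈ V,
      euler (euler (euler (euler X0))) α =
        α * shiftEuler c₁ (shiftEuler c₂ (shiftEuler c₃ (shiftEuler c₄ X0))) α)
    (hL2 : ∀ α ∈ V,
      euler (euler (euler (euler (fun β => X0 β * t β)))) α =
        α * shiftEuler c₁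
          (shiftEuler c₂ (shiftEuler c₃ (shiftEuler c₄ (fun β => X0 β * t β)))) α) :
    ∀ f ∈ Algebra.adjoin ℂ (genSet X0 t),
      ∃ g ∈ Algebra.adjoin ℂ (genSet X0 t), Set.EqOn (Dop X0 t f) g V := by
  have hs : DifferentiableOn ℂ (euler t) V := ht.weightedDeriv hVopen differentiableOn_id
  have hwD : DifferentiableOn ℂ (dopCoeff X0 t * fun α => α) V :=
    (differentiableOn_dopCoeff hVopen hX0 ht).mul differentiableOn_id
  have hwD0 : (dopCoeff X0 t * fun α => α) ∈
      (levelAlg (weightedDeriv (dopCoeff X0 t * fun α => α)) X0 (euler t) 0).eqOnClosure V :=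
    le_eqOnClosure (mul_mem (dopCoeff_mem_levelAlg _ 0) (id_mem_levelAlg 0))
  have hDθ := levelAlg_le_eqOnClosure_of_eqOn_mul (w := fun α => α) hVopen hV01
    differentiableOn_id hX0 hs hX0ne hθtne (le_eqOnClosure (id_mem_levelAlg 0))
    (le_eqOnClosure (dopCoeff_mem_levelAlg _ 0)) (eqOn_refl _ _) 3
  have hθD := levelAlg_le_eqOnClosure_of_eqOn_mul (w' := fun α => α) hVopen hV01 hwD hX0 hs
    hX0ne hθtne hwD0 (le_eqOnClosure (inv_dopCoeff_mem_levelAlg _ 0))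
    (fun α hα => by simp [inv_mul_cancel_left₀ (dopCoeff_ne_zero hV01 hX0ne hθtne hα)]) 2
  have hPF := levelAlg_euler_three_le hVopen (fun α hα => (hV01 α hα).2) hX0 ht hX0ne hL1 hL2
  intro f hf
  rw [genSet_eq_levelGens, Dop_eq_weightedDeriv] at hf ⊢
  exact eqOnClosure_le_eqOnClosure (hDθ.trans (eqOnClosure_le_eqOnClosure
    (hPF.trans (eqOnClosure_le_eqOnClosure hθD))))
    (weightedDeriv_mem_levelAlg_succ hVopen hV01 hwD hX0 hs hX0ne hθtne hwD0 hf)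

/-- Let `X⁰` and `X⁰·t` be holomorphic solutions on a nonempty connected
open `V ⊆ ℂ∖{0,1}` of `ℒf = 0`, where `ℒ = θ⁴ − α(θ+c₁)(θ+c₂)(θ+c₃)(θ+c₄)`, with `X⁰`
and `θt` nowhere vanishing.  Then the `ℂ`-subalgebra of functions generated by
`α^{±1}, (1−α)⁻¹, (X⁰)^{±1}, (θt)^{±1}` and `𝒟X⁰, 𝒟²X⁰, 𝒟³X⁰, 𝒟(θt), 𝒟²(θt)` is closed
under the derivation `𝒟f = (1−α)(X⁰θt)²θf` (as functions on `V`). -/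
theorem stmt_8 (V : Set ℂ) (hVopen : IsOpen V) (hVconn : IsConnected V)
    (hV01 : ∀ α ∈ V, α ≠ 0 ∧ α ≠ 1)
    (c₁ c₂ c₃ c₄ : ℂ)
    (X0 t : ℂ → ℂ)
    (hX0 : DifferentiableOn ℂ X0 V) (ht : DifferentiableOn ℂ t V)
    (hX0ne : ∀ α ∈ V, X0 α ≠ 0) (hθtne : ∀ α ∈ V, α * deriv t α ≠ 0)
    (hL1 : ∀ α ∈ V,
      euler (euler (euler (euler X0))) α =
        α * shiftEuler c₁ (shiftEuler c₂ (shiftEuler c₃ (shiftEuler c₄ X0))) α)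
    (hL2 : ∀ α ∈ V,
      euler (euler (euler (euler (fun β => X0 β * t β)))) α =
        α * shiftEuler c₁
          (shiftEuler c₂ (shiftEuler c₃ (shiftEuler c₄ (fun β => X0 β * t β)))) α) :
    ∀ f ∈ Algebra.adjoin ℂ (genSet X0 t),
      ∃ g ∈ Algebra.adjoin ℂ (genSet X0 t), Set.EqOn (Dop X0 t f) g V :=
  stmt_8_general V hVopen hV01 c₁ c₂ c₃ c₄ X0 t hX0 ht hX0ne hθtne hL1 hL2
end

section
/- Assume Setting (★): U ⊆ ℂ is a nonempty connected open set, r is a nonzero real number, α : U → ℂ∖{0,1} is holomorphic, A : U → ℂ is holomorphic and nowhere vanishing, (1/2πi)α′ = α(1−α)A² on U, and A = ω₀ ∘ α for some holomorphic solution ω₀ of α(1−α)ω₀″ + (1−2α)ω₀′ − (1/r)(1−1/r)ω₀ = 0 on an open set containing α(U). Then, with ∂_τ = (1/2πi)d/dτ, the function A satisfies A·∂_τ²A = 2(∂_τA)² + (1/r)(1 − 1/r)·α(1−α)·A⁶ on U; equivalently, ∂_τ²(log A) = (∂_τ log A)² + (1/r)(1−1/r)·α(1−α)·A⁴. -/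
/-!
With `A = ω₀ ∘ α`, the relation `∂_τ α = α(1-α)A²` says that `α` solves the autonomous
equation `α' = F ∘ α` for `F = hauptmodulField (2πi) ω₀`, i.e. `F z = 2πi·z(1-z)ω₀(z)²`.
Along a solution of `α' = F ∘ α`, differentiating `g ∘ α` amounts to applying `g ↦ g'·F`, so
`A' = (ω₀'F) ∘ α` and `A'' = ((ω₀'F)'F) ∘ α`; the hypergeometric equation then eliminates `ω₀''`
and leaves the claimed identity.
-/

open Set

theorem deriv_eq_of_eqOn_comp {𝕜 : Type*} [NontriviallyNormedField 𝕜] {A g α F : 𝕜 → 𝕜}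
    {U : Set 𝕜} (hU : IsOpen U) (hα : ∀ t ∈ U, HasDerivAt α (F (α t)) t)
    (hg : ∀ t ∈ U, DifferentiableAt 𝕜 g (α t)) (hA : EqOn A (g ∘ α) U) :
    ∀ t ∈ U, deriv A t = deriv g (α t) * F (α t) := by
  intro t ht
  rw [hA.deriv hU ht]
  exact ((hg t ht).hasDerivAt.comp t (hα t ht)).deriv

theorem deriv_deriv_eq_of_eqOn_comp {A g α F : ℂ → ℂ} {U W : Set ℂ} (hU : IsOpen U)
    (hW : IsOpen W) (hαW : MapsTo α U W) (hα : ∀ t ∈ U, HasDerivAt α (F (α t)) t)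
    (hg : DifferentiableOn ℂ g W) (hF : DifferentiableOn ℂ F W) (hA : EqOn A (g ∘ α) U) :
    ∀ t ∈ U, deriv (deriv A) t = deriv (fun z => deriv g z * F z) (α t) * F (α t) := by
  have hdiff : ∀ {h : ℂ → ℂ}, DifferentiableOn ℂ h W → ∀ t ∈ U, DifferentiableAt ℂ h (α t) :=
    fun hh t ht => hh.differentiableAt (hW.mem_nhds (hαW ht))
  exact deriv_eq_of_eqOn_comp hU hα (hdiff ((hg.deriv hW).mul hF))
    (deriv_eq_of_eqOn_comp hU hα (hdiff hg) hA)

def hauptmodulField (c : ℂ) (ω : ℂ → ℂ) (z : ℂ) : ℂ := c * (z * (1 - z) * ω z ^ 2)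

theorem differentiableOn_hauptmodulField {c : ℂ} {ω : ℂ → ℂ} {W : Set ℂ}
    (hω : DifferentiableOn ℂ ω W) : DifferentiableOn ℂ (hauptmodulField c ω) W := by
  unfold hauptmodulField
  fun_prop

theorem hasDerivAt_deriv_mul_hauptmodulField {c z : ℂ} {ω : ℂ → ℂ} (hω : DifferentiableAt ℂ ω z)
    (hω' : DifferentiableAt ℂ (deriv ω) z) :
    HasDerivAt (fun z => deriv ω z * hauptmodulField c ω z)
      (deriv (deriv ω) z * hauptmodulField c ω z + deriv ω z *
        (c * ((1 - 2 * z) * ω z ^ 2 + z * (1 - z) * (2 * ω z * deriv ω z)))) z := by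
  refine (hω'.hasDerivAt.mul ((((hasDerivAt_id z).mul ((hasDerivAt_const z 1).sub
    (hasDerivAt_id z))).mul (hω.hasDerivAt.pow 2)).const_mul c)).congr_deriv ?_
  simp only [hauptmodulField, id, Pi.mul_apply, Pi.sub_apply, Pi.pow_apply]
  ring

theorem mul_second_deriv_eq_of_hypergeometric {c k z w w₁ w₂ : ℂ} (hc : c ≠ 0)
    (h : z * (1 - z) * w₂ + (1 - 2 * z) * w₁ - k * w = 0) :
    w * ((1 / c) ^ 2 * ((w₂ * (c * (z * (1 - z) * w ^ 2)) + w₁ *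
        (c * ((1 - 2 * z) * w ^ 2 + z * (1 - z) * (2 * w * w₁)))) * (c * (z * (1 - z) * w ^ 2))))
      = 2 * (1 / c * (w₁ * (c * (z * (1 - z) * w ^ 2)))) ^ 2 + k * z * (1 - z) * w ^ 6 := by
  linear_combination (norm := skip) (z * (1 - z) * w ^ 5) * h
  field_simp
  ring

theorem stmt_10_general (U : Set ℂ) (hUopen : IsOpen U)
    (r : ℝ)
    (α A : ℂ → ℂ)
    (hα : DifferentiableOn ℂ α U)
    (hrel : ∀ τ ∈ U,
      (1 / (2 * (Real.pi : ℂ) * Complex.I)) * deriv α τ = α τ * (1 - α τ) * (A τ) ^ 2)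
    (ω₀ : ℂ → ℂ) (W : Set ℂ) (hWopen : IsOpen W) (hWsub : α '' U ⊆ W)
    (hω₀ : DifferentiableOn ℂ ω₀ W)
    (hω₀eq : ∀ z ∈ W,
      z * (1 - z) * deriv (deriv ω₀) z + (1 - 2 * z) * deriv ω₀ z
        - (1 / (r : ℂ)) * (1 - 1 / (r : ℂ)) * ω₀ z = 0)
    (hAω : ∀ τ ∈ U, A τ = ω₀ (α τ)) :
    ∀ τ ∈ U,
      A τ * ((1 / (2 * (Real.pi : ℂ) * Complex.I)) ^ 2 * deriv (deriv A) τ)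
        = 2 * ((1 / (2 * (Real.pi : ℂ) * Complex.I)) * deriv A τ) ^ 2
          + (1 / (r : ℂ)) * (1 - 1 / (r : ℂ)) * α τ * (1 - α τ) * (A τ) ^ 6 := by
  intro τ hτ
  set c : ℂ := 2 * (Real.pi : ℂ) * Complex.I
  have hc : c ≠ 0 := by simp [c, Real.pi_ne_zero, Complex.I_ne_zero]
  have hαW : MapsTo α U W := fun t ht => hWsub ⟨t, ht, rfl⟩
  have hω₀at : ∀ t ∈ U, DifferentiableAt ℂ ω₀ (α t) :=
    fun t ht => hω₀.differentiableAt (hWopen.mem_nhds (hαW ht))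
  have hαF : ∀ t ∈ U, HasDerivAt α (hauptmodulField c ω₀ (α t)) t := by
    intro t ht
    refine (hα.differentiableAt (hUopen.mem_nhds ht)).hasDerivAt.congr_deriv ?_
    rw [hauptmodulField, ← hAω t ht, ← hrel t ht]
    field_simp
  have hAω' : EqOn A (ω₀ ∘ α) U := hAω
  rw [deriv_deriv_eq_of_eqOn_comp hUopen hWopen hαW hαF hω₀
      (differentiableOn_hauptmodulField hω₀) hAω' τ hτ,
    (hasDerivAt_deriv_mul_hauptmodulField (hω₀at τ hτ)
      ((hω₀.deriv hWopen).differentiableAt (hWopen.mem_nhds (hαW hτ)))).deriv,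
    deriv_eq_of_eqOn_comp hUopen hαF hω₀at hAω' τ hτ, hAω τ hτ]
  exact mul_second_deriv_eq_of_hypergeometric hc (hω₀eq _ (hαW hτ))

/-- In Setting (★) (`U ⊆ ℂ` nonempty connected open, `r` nonzero real,
`α : U → ℂ∖{0,1}` holomorphic, `A` holomorphic nowhere vanishing, `(1/2πi)α′ = α(1−α)A²`,
and `A = ω₀ ∘ α` for a holomorphic solution `ω₀` of the hypergeometric equation
`z(1−z)ω₀″ + (1−2z)ω₀′ − (1/r)(1−1/r)ω₀ = 0` on an open set containing `α(U)`),
one has `A·∂_τ²A = 2(∂_τA)² + (1/r)(1−1/r)·α(1−α)·A⁶` on `U`, where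
`∂_τ = (1/2πi)d/dτ`. -/
theorem stmt_10 (U : Set ℂ) (hUopen : IsOpen U) (hUconn : IsConnected U)
    (r : ℝ) (hr : r ≠ 0)
    (α A : ℂ → ℂ)
    (hα : DifferentiableOn ℂ α U) (hα01 : ∀ τ ∈ U, α τ ≠ 0 ∧ α τ ≠ 1)
    (hA : DifferentiableOn ℂ A U) (hAne : ∀ τ ∈ U, A τ ≠ 0)
    (hrel : ∀ τ ∈ U,
      (1 / (2 * (Real.pi : ℂ) * Complex.I)) * deriv α τ = α τ * (1 - α τ) * (A τ) ^ 2)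
    (ω₀ : ℂ → ℂ) (W : Set ℂ) (hWopen : IsOpen W) (hWsub : α '' U ⊆ W)
    (hω₀ : DifferentiableOn ℂ ω₀ W)
    (hω₀eq : ∀ z ∈ W,
      z * (1 - z) * deriv (deriv ω₀) z + (1 - 2 * z) * deriv ω₀ z
        - (1 / (r : ℂ)) * (1 - 1 / (r : ℂ)) * ω₀ z = 0)
    (hAω : ∀ τ ∈ U, A τ = ω₀ (α τ)) :
    ∀ τ ∈ U,
      A τ * ((1 / (2 * (Real.pi : ℂ) * Complex.I)) ^ 2 * deriv (deriv A) τ)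
        = 2 * ((1 / (2 * (Real.pi : ℂ) * Complex.I)) * deriv A τ) ^ 2
          + (1 / (r : ℂ)) * (1 - 1 / (r : ℂ)) * α τ * (1 - α τ) * (A τ) ^ 6 :=
  stmt_10_general U hUopen r α A hα hrel ω₀ W hWopen hWsub hω₀ hω₀eq hAω
end
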